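/- arXiv:0806.0279 — 5 statements merged into one kernel-verified Lean document; each statement's English description precedes it below -/
import Mathlib

section
/- For integers 1 ≤ m ≤ k and n ≥ k+1, the number op_{n,k}^m of ordered preference sets of length n with exactly k flaws and leading term m satisfies (2n−m) · op_{n,k}^m = (2k−m+4) · C(2n−m, n−k−2). -/
/-- The first unoccupied parking space `j` with `p ≤ j ≤ n`, if any. -/
def firstFree (n : ℕ) (occ : Finset ℕ) (p : ℕ) : Option ℕ :=
  (List.range' p (n + 1 - p)).find? (fun j => decide (j ∉ occ))

/-- Number of cars that fail to park, processing the preference list in order,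
given the set of already occupied spaces. -/
def flawsFrom (n : ℕ) : List ℕ → Finset ℕ → ℕ
  | [], _ => 0
  | p :: rest, occ =>
    match firstFree n occ p with
    | none => flawsFrom n rest occ + 1
    | some j => flawsFrom n rest (insert j occ)

/-- The number of flaws (unparked cars) of a preference list of length `n`. -/
def flaws (n : ℕ) (a : List ℕ) : ℕ := flawsFrom n a ∅

/-- A preference set of length `n`: a list of length `n` with entries in `{1, …, n}`. -/
def IsPrefSet (n : ℕ) (a : List ℕ) : Prop :=
  a.length = n ∧ ∀ x ∈ a, 1 ≤ x ∧ x ≤ n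

/-- An ordered preference set of length `n`: a nondecreasing preference set. -/
def IsOrderedPrefSet (n : ℕ) (a : List ℕ) : Prop :=
  IsPrefSet n a ∧ a.Pairwise (· ≤ ·)

/-- `op_{n,≥k}`: number of ordered preference sets of length `n` with at least `k` flaws. -/
noncomputable def opGe (n k : ℕ) : ℕ :=
  {a : List ℕ | IsOrderedPrefSet n a ∧ k ≤ flaws n a}.ncard

/-- `op_{n,≤k}`: number of ordered preference sets of length `n` with at most `k` flaws. -/
noncomputable def opLe (n k : ℕ) : ℕ :=
  {a : List ℕ | IsOrderedPrefSet n a ∧ flaws n a ≤ k}.ncard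

/-- `op_{n,k}`: number of ordered preference sets of length `n` with exactly `k` flaws. -/
noncomputable def opEq (n k : ℕ) : ℕ :=
  {a : List ℕ | IsOrderedPrefSet n a ∧ flaws n a = k}.ncard

/-- `op_{n,≥k,≤l}`: at least `k` flaws, every entry at most `l`. -/
noncomputable def opGeLe (n k l : ℕ) : ℕ :=
  {a : List ℕ | IsOrderedPrefSet n a ∧ k ≤ flaws n a ∧ ∀ x ∈ a, x ≤ l}.ncard

/-- `op_{n,≥k,≤l}^m`: at least `k` flaws, every entry at most `l`, leading term `m`. -/
noncomputable def opGeLeLead (n k l m : ℕ) : ℕ :=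
  {a : List ℕ | IsOrderedPrefSet n a ∧ k ≤ flaws n a ∧ (∀ x ∈ a, x ≤ l) ∧
    a.head? = some m}.ncard

/-- `op_{n,k,≤l}^m`: exactly `k` flaws, every entry at most `l`, leading term `m`. -/
noncomputable def opEqLeLead (n k l m : ℕ) : ℕ :=
  {a : List ℕ | IsOrderedPrefSet n a ∧ flaws n a = k ∧ (∀ x ∈ a, x ≤ l) ∧
    a.head? = some m}.ncard

/-- `op_{n,k}^m`: exactly `k` flaws, leading term `m`. -/
noncomputable def opLead (n k m : ℕ) : ℕ :=
  {a : List ℕ | IsOrderedPrefSet n a ∧ flaws n a = k ∧ a.head? = some m}.ncard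

/-- `op_{n,k,=l}^m`: exactly `k` flaws, maximal entry exactly `l`, leading term `m`. -/
noncomputable def opMaxLead (n k l m : ℕ) : ℕ :=
  {a : List ℕ | IsOrderedPrefSet n a ∧ flaws n a = k ∧ (∀ x ∈ a, x ≤ l) ∧ l ∈ a ∧
    a.head? = some m}.ncard

/-- Binomial coefficient `C(a, b)` with an integer lower index, which is `0`
when `b < 0` (the standard convention). -/
def chooseInt (a : ℕ) (b : ℤ) : ℕ := if 0 ≤ b then a.choose b.toNat else 0

/-!
For a nondecreasing preference list the parking process only tracks a frontier `p`: the next car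
with preference `q` parks at `max q (p + 1)` if that space exists. Exactly `n - k` cars park iff the
first `n - k` park but not the first `n - k + 1`. Among sorted lists of length `r` with entries in
`[b, n]`, those whose first `t` cars park satisfy a staircase condition; splitting on whether the
first entry equals `b` and applying Pascal's rule shows that there are
`multichoose (n + 1 - b) r - C(n + r - b, t - 2)` of them. Fixing `a₁ = m`, the number
`op_{n,k}^m` is the ballot-type difference `C(2n-m-1, n-k-2) - C(2n-m-1, n-k-3)`, which equals
`(2k-m+4)/(2n-m) · C(2n-m, n-k-2)`.
-/

open Finset

theorem chooseInt_of_neg {a : ℕ} {j : ℤ} (hj : j < 0) : chooseInt a j = 0 :=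
  if_neg (by omega)

theorem chooseInt_natCast (a j : ℕ) : chooseInt a j = a.choose j := by
  simp [chooseInt]

theorem chooseInt_succ_succ (a : ℕ) (j : ℤ) :
    chooseInt (a + 1) (j + 1) = chooseInt a j + chooseInt a (j + 1) := by
  rcases lt_trichotomy j (-1) with hj | rfl | hj
  · simp [chooseInt_of_neg (show j < 0 by omega), chooseInt_of_neg (show j + 1 < 0 by omega)]
  · simp [chooseInt]
  · lift j to ℕ using (by omega)
    rw [← Nat.cast_add_one, chooseInt_natCast, chooseInt_natCast, chooseInt_natCast,
      Nat.choose_succ_succ]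

theorem add_one_mul_chooseInt_sub_chooseInt_sub_one (a : ℕ) (j : ℤ) :
    ((a : ℤ) + 1) * (chooseInt a j - chooseInt a (j - 1)) =
      (a + 1 - 2 * j) * chooseInt (a + 1) j := by
  rcases lt_or_ge j 0 with hj | hj
  · simp [chooseInt_of_neg hj, chooseInt_of_neg (show j - 1 < 0 by omega)]
  · lift j to ℕ using hj
    rcases j with _ | i
    · simp [chooseInt]
    · have hpascal : ((a + 1).choose (i + 1) : ℤ) = a.choose i + a.choose (i + 1) := by
        exact_mod_cast Nat.choose_succ_succ a i
      have hmul : ((a : ℤ) + 1) * a.choose i = (a + 1).choose (i + 1) * (i + 1) := by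
        exact_mod_cast Nat.add_one_mul_choose_eq a i
      rw [show ((i + 1 : ℕ) : ℤ) - 1 = i by push_cast; ring]
      simp only [chooseInt_natCast]
      push_cast
      linear_combination -((a : ℤ) + 1) * hpascal - 2 * hmul

theorem Nat.multichoose_succ_eq_choose (u r : ℕ) : (u + 1).multichoose r = (u + r).choose u := by
  rw [Nat.multichoose_eq, show u + 1 + r - 1 = u + r by omega, Nat.choose_symm_add]

namespace OrderedPrefSet

/-- For a nondecreasing preference list, the occupied spaces at or beyond the current car's
preference form an interval ending at a frontier `p`, so that car parks at `max q (p + 1)`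
if that is at most `n`. This counts the cars that park, starting from frontier `p`. -/
def parkedFrom (n : ℕ) : List ℕ → ℕ → ℕ
  | [], _ => 0
  | q :: rest, p =>
    if max q (p + 1) ≤ n then parkedFrom n rest (max q (p + 1)) + 1 else parkedFrom n rest p

variable {n : ℕ}

theorem firstFree_eq_of_occupied {occ : Finset ℕ} {p q : ℕ}
    (hocc : ∀ s, q ≤ s → s ≤ n → (s ∈ occ ↔ s ≤ p)) :
    firstFree n occ q = if max q (p + 1) ≤ n then some (max q (p + 1)) else none := by
  unfold firstFree
  split_ifs with h
  · rw [List.find?_range'_eq_some]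
    refine ⟨?_, ?_, fun j hqj hj => ?_⟩
    · simp [hocc _ (le_max_left _ _) h]
    · simp only [List.mem_range'_1]; omega
    · simpa [hocc j hqj (by omega)] using (by omega : j ≤ p)
  · rw [List.find?_range'_eq_none]
    intro j hqj hj
    simpa [hocc j hqj (by omega)] using (by omega : j ≤ p)

theorem flawsFrom_add_parkedFrom {L : List ℕ} {occ : Finset ℕ} {b p : ℕ}
    (hsort : L.Pairwise (· ≤ ·)) (hb : ∀ x ∈ L, b ≤ x)
    (hocc : ∀ s, b ≤ s → s ≤ n → (s ∈ occ ↔ s ≤ p)) :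
    flawsFrom n L occ + parkedFrom n L p = L.length := by
  induction L generalizing occ b p with
  | nil => rfl
  | cons q rest ih =>
    rw [List.pairwise_cons] at hsort
    have hoccq : ∀ s, q ≤ s → s ≤ n → (s ∈ occ ↔ s ≤ p) :=
      fun s hs => hocc s ((hb q List.mem_cons_self).trans hs)
    have hfree := firstFree_eq_of_occupied hoccq
    split_ifs at hfree with h
    · have hocc' : ∀ s, q ≤ s → s ≤ n →
          (s ∈ insert (max q (p + 1)) occ ↔ s ≤ max q (p + 1)) := by
        intro s hqs hsn
        rw [mem_insert, hoccq s hqs hsn]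
        omega
      have := ih hsort.2 hsort.1 hocc'
      simp only [flawsFrom, parkedFrom, hfree, if_pos h, List.length_cons]
      omega
    · have := ih hsort.2 hsort.1 hoccq
      simp only [flawsFrom, parkedFrom, hfree, if_neg h, List.length_cons]
      omega

theorem flaws_add_parkedFrom {a : List ℕ} (hsort : a.Pairwise (· ≤ ·)) (hpos : ∀ x ∈ a, 1 ≤ x) :
    flaws n a + parkedFrom n a 0 = a.length :=
  flawsFrom_add_parkedFrom hsort hpos (by simp; omega)

theorem add_parkedFrom_le {L : List ℕ} {p : ℕ} (hp : p ≤ n) : p + parkedFrom n L p ≤ n := by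
  induction L generalizing p with
  | nil => simpa [parkedFrom]
  | cons q rest ih =>
    simp only [parkedFrom]
    split_ifs with h
    · have := ih h; omega
    · exact ih hp

theorem add_parkedFrom_cons_le {L : List ℕ} {p q : ℕ} (hq : q ≤ n) (hp : p ≤ n) :
    q + parkedFrom n (q :: L) p ≤ n + 1 := by
  simp only [parkedFrom]
  split_ifs with h
  · have := add_parkedFrom_le (L := L) h; omega
  · have := add_parkedFrom_le (L := L) hp; omega

theorem le_parkedFrom_iff_le_parkedFrom {L : List ℕ} {t p p' : ℕ} (hL : ∀ x ∈ L, x ≤ n)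
    (hp : p + t ≤ n) (hp' : p' + t ≤ n) :
    t ≤ parkedFrom n L p ↔ t ≤ parkedFrom n L p' := by
  induction L generalizing t p p' with
  | nil => rfl
  | cons q rest ih =>
    cases t with
    | zero => simp
    | succ s =>
      have hq := hL q List.mem_cons_self
      simp only [parkedFrom, if_pos (show max q (p + 1) ≤ n by omega),
        if_pos (show max q (p' + 1) ≤ n by omega), Nat.add_le_add_iff_right]
      by_cases hqs : q + s ≤ n
      · exact ih (fun x hx => hL x (List.mem_cons_of_mem _ hx)) (by omega) (by omega)
      · have := add_parkedFrom_le (L := rest) (show max q (p + 1) ≤ n by omega)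
        have := add_parkedFrom_le (L := rest) (show max q (p' + 1) ≤ n by omega)
        omega

def sortedLists (n : ℕ) : ℕ → ℕ → Finset (List ℕ)
  | 0, _ => {[]}
  | r + 1, b => (Icc b n).biUnion fun q => (sortedLists n r q).image (q :: ·)

theorem mem_sortedLists {r b : ℕ} {L : List ℕ} :
    L ∈ sortedLists n r b ↔ L.length = r ∧ L.Pairwise (· ≤ ·) ∧ ∀ x ∈ L, b ≤ x ∧ x ≤ n := by
  induction r generalizing b L with
  | zero => cases L <;> simp [sortedLists]
  | succ r ih =>
    cases L with
    | nil => simp [sortedLists]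
    | cons q M =>
      simp only [sortedLists, mem_biUnion, mem_Icc, mem_image, ih, List.cons.injEq,
        List.length_cons, List.pairwise_cons, List.forall_mem_cons]
      constructor
      · rintro ⟨q, hq, M, ⟨hlen, hsort, hM⟩, rfl, rfl⟩
        exact ⟨by omega, ⟨fun x hx => (hM x hx).1, hsort⟩, hq,
          fun x hx => ⟨hq.1.trans (hM x hx).1, (hM x hx).2⟩⟩
      · rintro ⟨hlen, ⟨hqM, hsort⟩, hq, hM⟩
        exact ⟨q, hq, M, ⟨by omega, hsort, fun x hx => ⟨hqM x hx, (hM x hx).2⟩⟩, rfl, rfl⟩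

theorem sortedLists_succ {r b : ℕ} (hb : b ≤ n) :
    sortedLists n (r + 1) b =
      (sortedLists n r b).image (b :: ·) ∪ sortedLists n (r + 1) (b + 1) := by
  rw [sortedLists, ← insert_Icc_add_one_left_eq_Icc hb, biUnion_insert]
  rfl

/-- Whether the first `t` cars park does not depend on the frontier `p` as long as
`p + t ≤ n` (`mem_firstParked`); `n - t` is the choice that makes `firstParked_succ` hold. -/
def firstParked (n r b t : ℕ) : Finset (List ℕ) :=
  (sortedLists n r b).filter fun L => t ≤ parkedFrom n L (n - t)

theorem mem_firstParked {r b t p : ℕ} {L : List ℕ} (hp : p + t ≤ n) :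
    L ∈ firstParked n r b t ↔ L ∈ sortedLists n r b ∧ t ≤ parkedFrom n L p := by
  rw [firstParked, mem_filter, and_congr_right_iff]
  intro hL
  exact le_parkedFrom_iff_le_parkedFrom (fun x hx => ((mem_sortedLists.mp hL).2.2 x hx).2)
    (by omega) hp

theorem firstParked_succ {r b t : ℕ} (hb : 1 ≤ b) (hbn : b ≤ n) (hbt : b + t ≤ n + 1) :
    firstParked n (r + 1) b t =
      (firstParked n r b (t - 1)).image (b :: ·) ∪ firstParked n (r + 1) (b + 1) t := by
  rw [firstParked, sortedLists_succ hbn, filter_union, filter_image]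
  congr 2
  refine filter_congr fun M _ => ?_
  cases t with
  | zero => simp
  | succ s =>
    have hfront : max b (n - (s + 1) + 1) = n - s := by omega
    simp only [parkedFrom, hfront, if_pos (Nat.sub_le n s), Nat.add_sub_cancel]
    omega

theorem firstParked_eq_empty {r b t : ℕ} (ht : 1 ≤ t) (h : n + 1 < b + t) :
    firstParked n r b t = ∅ := by
  refine eq_empty_of_forall_notMem fun L hL => ?_
  obtain ⟨hsorted, hpark⟩ := mem_filter.mp hL
  obtain ⟨-, -, hbounds⟩ := mem_sortedLists.mp hsorted
  cases L with
  | nil => simp [parkedFrom] at hpark; omega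
  | cons q M =>
    have := add_parkedFrom_cons_le (L := M) (p := n - t) (hbounds q List.mem_cons_self).2
      (Nat.sub_le n t)
    have := (hbounds q List.mem_cons_self).1
    omega

theorem disjoint_image_cons_firstParked {r r' b t t' : ℕ} :
    Disjoint ((firstParked n r b t).image (b :: ·)) (firstParked n r' (b + 1) t') := by
  refine disjoint_left.mpr fun L hL hL' => ?_
  obtain ⟨M, -, rfl⟩ := mem_image.mp hL
  have := (mem_sortedLists.mp (mem_filter.mp hL').1).2.2 b List.mem_cons_self
  omega

theorem card_firstParked {r b t : ℕ} (hb : 1 ≤ b) (hbn : b ≤ n + 1) (hbt : b + t ≤ n + 2)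
    (htr : t ≤ r) :
    (firstParked n r b t).card + chooseInt (n + r - b) (t - 2) = (n + 1 - b).multichoose r := by
  induction r generalizing b t with
  | zero =>
    obtain rfl : t = 0 := by omega
    simp [firstParked, sortedLists, chooseInt]
  | succ r ihr =>
    induction hs : n + 1 - b generalizing b with
    | zero =>
      obtain rfl : b = n + 1 := by omega
      rw [chooseInt_of_neg (by omega)]
      simp [firstParked, sortedLists]
    | succ s ihs =>
      by_cases hbt' : b + t ≤ n + 1
      · have hhead := ihr hb (by omega) (by omega) (by omega : t - 1 ≤ r)
        have htail := ihs (b := b + 1) (by omega) (by omega) (by omega) (by omega)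
        have hpascal : chooseInt (n + r - b) (((t - 1 : ℕ) : ℤ) - 2) +
            chooseInt (n + r - b) (t - 2) = chooseInt (n + r - b + 1) (t - 2) := by
          rcases t with _ | t
          · simp [chooseInt]
          · rw [show ((t + 1 : ℕ) : ℤ) - 2 = (t : ℤ) - 2 + 1 by push_cast; ring,
              chooseInt_succ_succ, Nat.add_sub_cancel]
        rw [show n + (r + 1) - (b + 1) = n + r - b by omega] at htail
        rw [hs] at hhead
        rw [firstParked_succ hb (by omega) hbt',
          card_union_of_disjoint disjoint_image_cons_firstParked,
          card_image_of_injective _ List.cons_injective,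
          show n + (r + 1) - b = n + r - b + 1 by omega, ← hpascal, Nat.multichoose_succ_succ,
          ← hhead, ← htail]
        ring
      · obtain ⟨u, rfl⟩ : ∃ u, t = u + 2 := ⟨t - 2, by omega⟩
        obtain rfl : u = s := by omega
        rw [firstParked_eq_empty (by omega) (by omega), card_empty, zero_add,
          show n + (r + 1) - b = u + (r + 1) by omega, Nat.multichoose_succ_eq_choose,
          show ((u + 2 : ℕ) : ℤ) - 2 = u by push_cast; ring, chooseInt_natCast]

theorem isOrderedPrefSet_cons_iff {m : ℕ} {M : List ℕ} (hm : 1 ≤ m) (hmn : m ≤ n) :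
    IsOrderedPrefSet n (m :: M) ↔ M ∈ sortedLists n (n - 1) m := by
  simp only [IsOrderedPrefSet, IsPrefSet, mem_sortedLists, List.length_cons,
    List.pairwise_cons, List.forall_mem_cons]
  constructor
  · rintro ⟨⟨hlen, -, hM⟩, hmM, hsort⟩
    exact ⟨by omega, hsort, fun x hx => ⟨hmM x hx, (hM x hx).2⟩⟩
  · rintro ⟨hlen, hsort, hM⟩
    exact ⟨⟨by omega, ⟨hm, hmn⟩, fun x hx => ⟨hm.trans (hM x hx).1, (hM x hx).2⟩⟩,
      fun x hx => (hM x hx).1, hsort⟩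

theorem flaws_cons_add_parkedFrom {m : ℕ} {M : List ℕ} (hm : 1 ≤ m) (hmn : m ≤ n)
    (hsort : (m :: M).Pairwise (· ≤ ·)) : flaws n (m :: M) + parkedFrom n M m = M.length := by
  have hpos : ∀ x ∈ m :: M, 1 ≤ x :=
    List.forall_mem_cons.mpr ⟨hm, fun x hx => hm.trans (List.rel_of_pairwise_cons hsort hx)⟩
  have := flaws_add_parkedFrom (n := n) hsort hpos
  rw [parkedFrom, if_pos (by omega), show max m (0 + 1) = m by omega, List.length_cons] at this
  omega

theorem opLead_add_card_firstParked {k m : ℕ} (hm : 1 ≤ m) (hmk : m ≤ k) (hkn : k < n) :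
    opLead n k m + (firstParked n (n - 1) m (n - k)).card =
      (firstParked n (n - 1) m (n - k - 1)).card := by
  have hsub : firstParked n (n - 1) m (n - k) ⊆ firstParked n (n - 1) m (n - k - 1) := by
    intro M hM
    rw [mem_firstParked (p := m) (by omega)] at hM ⊢
    exact ⟨hM.1, by omega⟩
  have hset : {a | IsOrderedPrefSet n a ∧ flaws n a = k ∧ a.head? = some m} =
      ((firstParked n (n - 1) m (n - k - 1) \ firstParked n (n - 1) m (n - k)).image (m :: ·) :
        Set (List ℕ)) := by
    ext a
    rcases a with _ | ⟨x, M⟩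
    · simp
    simp only [Set.mem_ofPred_eq, List.head?_cons, Option.some.injEq, coe_image, coe_sdiff,
      Set.mem_image, Set.mem_sdiff, mem_coe, List.cons.injEq]
    by_cases hx : x = m
    swap
    · simp [hx, Ne.symm hx]
    subst x
    simp only [and_true, true_and, exists_eq_right,
      isOrderedPrefSet_cons_iff hm (by omega : m ≤ n),
      mem_firstParked (p := m) (show m + (n - k - 1) ≤ n by omega),
      mem_firstParked (p := m) (show m + (n - k) ≤ n by omega)]
    by_cases hM : M ∈ sortedLists n (n - 1) m
    · have hpark := flaws_cons_add_parkedFrom (n := n) hm (by omega)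
        ((isOrderedPrefSet_cons_iff hm (by omega)).mpr hM).2
      have hlen := (mem_sortedLists.mp hM).1
      simp only [hM, true_and]
      omega
    · simp [hM]
  rw [opLead, hset, Set.ncard_coe_finset, card_image_of_injective _ List.cons_injective,
    card_sdiff_add_card_eq_card hsub]

end OrderedPrefSet

theorem stmt11 (n k m : ℕ) (hm : 1 ≤ m) (hmk : m ≤ k) (hn : k + 1 ≤ n) :
    (2 * n - m) * opLead n k m = (2 * k - m + 4) * chooseInt (2 * n - m) ((n : ℤ) - k - 2) := by
  open OrderedPrefSet in
  obtain ⟨a, ha⟩ : ∃ a, 2 * n - m = a + 1 := ⟨2 * n - m - 1, by omega⟩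
  have hsplit := opLead_add_card_firstParked hm hmk hn
  have hfew := card_firstParked (n := n) (r := n - 1) (t := n - k - 1) hm (by omega) (by omega)
    (by omega)
  have hmany := card_firstParked (n := n) (r := n - 1) (t := n - k) hm (by omega) (by omega)
    (by omega)
  have hballot := add_one_mul_chooseInt_sub_chooseInt_sub_one a ((n : ℤ) - k - 2)
  rw [show n + (n - 1) - m = a by omega] at hfew hmany
  rw [show ((n - k - 1 : ℕ) : ℤ) - 2 = (n : ℤ) - k - 2 - 1 by omega] at hfew
  rw [show ((n - k : ℕ) : ℤ) - 2 = (n : ℤ) - k - 2 by omega] at hmany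
  have hcoef : ((2 * k - m : ℕ) : ℤ) + 4 = a + 1 - 2 * ((n : ℤ) - k - 2) := by omega
  rw [ha]
  zify at hsplit hfew hmany ⊢
  rw [hcoef]
  linear_combination hballot + (a + 1 : ℤ) * (hsplit - hmany + hfew)
end

section
/- For integers k ≥ 0 and n ≥ l ≥ k+1, the number op_{n,k,=l}^{k+1} of ordered preference sets (a_1,…,a_n) of length n with exactly k flaws, leading term a_1 = k+1, and max{a_i : 1 ≤ i ≤ n} = l, satisfies (n+l−k−1) · op_{n,k,=l}^{k+1} = (n−l+k+1) · C(n+l−k−1, l−k−1). -/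
/-!
With nondecreasing preferences all `≥ k + 1`, each car parks at `max a_i (t + 1)`, where `t` is the
last occupied spot, so exactly `k` cars fail precisely when `a_i ≤ k + 1 + i` for every
(0-indexed) `i`. The sets counted are therefore shifted ballot sequences with largest entry `l`.
Splitting such sequences with largest entry at most `e + 1` according to whether `e + 1` occurs,
and removing the last entry when it does, gives the ballot-triangle recurrence, whose solution is
`d / (2q + d) * C(2q + d, q)` with `q = l - k - 1` and `d = n - l + k + 1`.
-/

/-- The parking process in the state where every spot above `t` is free and every free spot up to
`t` lies below all remaining preferences. For nondecreasing preferences this state persists, the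
next car parking at `max p (t + 1)`. -/
def frontierFlaws (n : ℕ) : List ℕ → ℕ → ℕ
  | [], _ => 0
  | p :: r, t =>
    if max p (t + 1) ≤ n then frontierFlaws n r (max p (t + 1)) else frontierFlaws n r t + 1

lemma firstFree_eq_of_frontier {n t p : ℕ} {occ : Finset ℕ} (hocc : ∀ j ∈ occ, j ≤ t)
    (hfree : ∀ s ≤ t, s ∉ occ → s < p) :
    firstFree n occ p = if max p (t + 1) ≤ n then some (max p (t + 1)) else none := by
  have hocc_before : ∀ j, p ≤ j → j < max p (t + 1) → j ∈ occ := by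
    intro j hpj hj
    by_contra hj'
    have := hfree j (by omega) hj'
    omega
  have hfree_max : max p (t + 1) ∉ occ := fun h => by have := hocc _ h; omega
  unfold firstFree
  split_ifs with h
  · rw [List.find?_range'_eq_some]
    refine ⟨by simpa using hfree_max, List.mem_range'_1.mpr (by omega), fun j hpj hj => ?_⟩
    simpa using hocc_before j hpj hj
  · rw [List.find?_range'_eq_none]
    intro j hpj hj
    simpa using hocc_before j hpj (by omega)

lemma flawsFrom_eq_frontierFlaws (n : ℕ) :
    ∀ (a : List ℕ) (occ : Finset ℕ) (t : ℕ), a.Pairwise (· ≤ ·) → (∀ j ∈ occ, j ≤ t) →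
      (∀ s ≤ t, s ∉ occ → ∀ p ∈ a, s < p) → flawsFrom n a occ = frontierFlaws n a t
  | [], _, _, _, _, _ => rfl
  | p :: r, occ, t, hs, hocc, hfree => by
    rw [List.pairwise_cons] at hs
    have hfree_r : ∀ s ≤ t, s ∉ occ → ∀ x ∈ r, s < x := fun s hs' hso x hx =>
      (hfree s hs' hso p List.mem_cons_self).trans_le (hs.1 x hx)
    rw [flawsFrom, firstFree_eq_of_frontier hocc (fun s hs' hso => hfree s hs' hso p
      List.mem_cons_self), frontierFlaws]
    split_ifs with h
    · refine flawsFrom_eq_frontierFlaws n r _ _ hs.2 ?_ ?_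
      · intro j hj
        rcases Finset.mem_insert.mp hj with rfl | hj
        · rfl
        · have := hocc j hj; omega
      · intro s hs' hso x hx
        rw [Finset.mem_insert, not_or] at hso
        by_cases hst : s ≤ t
        · exact hfree_r s hst hso.2 x hx
        · have := hs.1 x hx; omega
    · exact congrArg (· + 1) (flawsFrom_eq_frontierFlaws n r occ t hs.2 hocc hfree_r)

lemma flaws_eq_frontierFlaws {n k : ℕ} {a : List ℕ} (hs : a.Pairwise (· ≤ ·))
    (hlow : ∀ x ∈ a, k + 1 ≤ x) : flaws n a = frontierFlaws n a k :=
  flawsFrom_eq_frontierFlaws n a ∅ k hs (by simp) fun s hs' _ p hp => by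
    have := hlow p hp; omega

lemma frontierFlaws_of_le (n : ℕ) : ∀ (a : List ℕ) {t : ℕ}, n ≤ t →
    frontierFlaws n a t = a.length
  | [], _, _ => rfl
  | p :: r, t, ht => by
    rw [frontierFlaws, if_neg (by omega), frontierFlaws_of_le n r ht, List.length_cons]

lemma length_add_le_frontierFlaws_add (n : ℕ) : ∀ (a : List ℕ) {t : ℕ}, t ≤ n →
    a.length + t ≤ frontierFlaws n a t + n
  | [], t, ht => show 0 + t ≤ 0 + n by omega
  | p :: r, t, ht => by
    rw [frontierFlaws, List.length_cons]
    split_ifs with h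
    · have := length_add_le_frontierFlaws_add n r h; omega
    · have := length_add_le_frontierFlaws_add n r ht; omega

lemma frontierFlaws_of_ballot (n : ℕ) : ∀ (a : List ℕ) {t : ℕ},
    (∀ i (h : i < a.length), a[i] ≤ t + 1 + i) → frontierFlaws n a t = a.length - (n - t)
  | [], _, _ => by simp [frontierFlaws]
  | p :: r, t, hball => by
    have hp : p ≤ t + 1 := hball 0 (by simp)
    by_cases htn : t < n
    · rw [frontierFlaws, if_pos (by omega), max_eq_right hp, List.length_cons,
        frontierFlaws_of_ballot n r (t := t + 1) fun i h => ?_]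
      · omega
      · have := hball (i + 1) (by simpa using h); simp at this; omega
    · rw [frontierFlaws_of_le n _ (by omega)]
      omega

lemma lt_frontierFlaws_add_of_not_ballot (n : ℕ) : ∀ (a : List ℕ) {t : ℕ}, (∀ x ∈ a, x ≤ n) →
    (∃ i, ∃ h : i < a.length, t + 1 + i < a[i]) → a.length + t < frontierFlaws n a t + n
  | [], _, _, ⟨_, h, _⟩ => absurd h (by simp)
  | p :: r, t, hle, ⟨i, hi, hbad⟩ => by
    have hpn : p ≤ n := hle p List.mem_cons_self
    have hle_r : ∀ x ∈ r, x ≤ n := fun x hx => hle x (List.mem_cons_of_mem p hx)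
    rw [frontierFlaws, List.length_cons]
    by_cases hp : t + 1 < p
    · rw [if_pos (by omega), max_eq_left hp.le]
      have := length_add_le_frontierFlaws_add n r hpn
      omega
    · obtain ⟨j, rfl⟩ : ∃ j, i = j + 1 := by
        rcases i with _ | j
        · exact absurd hbad (by simpa using hp)
        · exact ⟨j, rfl⟩
      have hj : j < r.length := by simpa using hi
      have hbad_r : t + 1 + 1 + j < r[j] := by simp at hbad; omega
      have := hle_r _ (List.getElem_mem hj)
      rw [if_pos (by omega), max_eq_right (by omega)]
      have := lt_frontierFlaws_add_of_not_ballot n r hle_r ⟨j, hj, hbad_r⟩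
      omega

/-- No car uses a spot `≤ k`, so `k` flaws means that every spot in `(k, n]` is filled, which for
nondecreasing preferences happens exactly when the `i`-th car prefers a spot `≤ k + 1 + i`. -/
lemma flaws_eq_iff_ballot {n k : ℕ} {a : List ℕ} (hk : k ≤ n) (hlen : a.length = n)
    (hs : a.Pairwise (· ≤ ·)) (hlow : ∀ x ∈ a, k + 1 ≤ x) (hle : ∀ x ∈ a, x ≤ n) :
    flaws n a = k ↔ ∀ i (h : i < a.length), a[i] ≤ k + 1 + i := by
  rw [flaws_eq_frontierFlaws hs hlow]
  refine ⟨fun hk' => ?_, fun hball => ?_⟩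
  · by_contra hbad
    push Not at hbad
    have := lt_frontierFlaws_add_of_not_ballot n a hle hbad
    omega
  · rw [frontierFlaws_of_ballot n a hball]
    omega

def ballotSet (k p e : ℕ) : Set (List ℕ) :=
  {a | a.length = p ∧ a.Pairwise (· ≤ ·) ∧ (∀ x ∈ a, k + 1 ≤ x ∧ x ≤ e) ∧
    ∀ i (h : i < a.length), a[i] ≤ k + 1 + i}

def ballotMaxSet (k p e : ℕ) : Set (List ℕ) := {a | a ∈ ballotSet k p e ∧ e ∈ a}

lemma ballotSet_finite (k p e : ℕ) : (ballotSet k p e).Finite := by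
  refine (Set.finite_range fun f : Fin p → Fin (e + 1) => List.ofFn fun i => (f i : ℕ)).subset ?_
  rintro a ⟨rfl, -, hbound, -⟩
  exact ⟨fun i => ⟨a[i], Nat.lt_succ_of_le (hbound _ (List.getElem_mem _)).2⟩, List.ofFn_getElem⟩

lemma ballotSet_lowest (k p : ℕ) : ballotSet k p (k + 1) = {List.replicate p (k + 1)} := by
  ext a
  simp only [ballotSet, Set.mem_ofPred_eq, Set.mem_singleton_iff]
  constructor
  · rintro ⟨hlen, -, hbound, -⟩
    exact List.eq_replicate_iff.mpr ⟨hlen, fun x hx => by have := hbound x hx; omega⟩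
  · rintro rfl
    refine ⟨List.length_replicate, List.pairwise_replicate.mpr (Or.inr le_rfl), ?_, ?_⟩
    · intro x hx
      rw [List.eq_of_mem_replicate hx]
      exact ⟨le_rfl, le_rfl⟩
    · intro i _
      rw [List.getElem_replicate]
      omega

lemma ballotSet_succ_eq_union (k p e : ℕ) :
    ballotSet k p (e + 1) = ballotSet k p e ∪ ballotMaxSet k p (e + 1) := by
  ext a
  simp only [ballotMaxSet, ballotSet, Set.mem_union, Set.mem_ofPred_eq]
  constructor
  · rintro ⟨hlen, hs, hbound, hball⟩
    by_cases he : e + 1 ∈ a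
    · exact Or.inr ⟨⟨hlen, hs, hbound, hball⟩, he⟩
    · refine Or.inl ⟨hlen, hs, fun x hx => ?_, hball⟩
      have := hbound x hx
      have : x ≠ e + 1 := fun h => he (h ▸ hx)
      omega
  · rintro (⟨hlen, hs, hbound, hball⟩ | ⟨ha, -⟩)
    · exact ⟨hlen, hs, fun x hx => ⟨(hbound x hx).1, (hbound x hx).2.trans e.le_succ⟩, hball⟩
    · exact ha

lemma disjoint_ballotSet_ballotMaxSet (k p e : ℕ) :
    Disjoint (ballotSet k p e) (ballotMaxSet k p (e + 1)) :=
  Set.disjoint_left.mpr fun _ ⟨_, _, hbound, _⟩ ⟨_, he⟩ => by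
    have := hbound _ he; omega

lemma ballotMaxSet_succ_eq_image {k p e : ℕ} (hke : k + 1 ≤ e) (hep : e ≤ k + 1 + p) :
    ballotMaxSet k (p + 1) e = (· ++ [e]) '' ballotSet k p e := by
  ext a
  constructor
  · rintro ⟨⟨hlen, hs, hbound, hball⟩, he⟩
    have hne : a ≠ [] := List.ne_nil_of_mem he
    have hlast : a.getLast hne = e :=
      le_antisymm (hbound _ (List.getLast_mem hne)).2 (hs.rel_getLast he)
    refine ⟨a.dropLast, ⟨by simp [hlen], hs.sublist (List.dropLast_sublist a),
      fun x hx => hbound x (List.mem_of_mem_dropLast hx), fun i h => ?_⟩, ?_⟩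
    · rw [List.getElem_dropLast]
      exact hball i _
    · rw [← hlast]
      exact List.dropLast_append_getLast hne
  · rintro ⟨b, ⟨hlen, hs, hbound, hball⟩, rfl⟩
    refine ⟨⟨by simp [hlen], ?_, ?_, fun i h => ?_⟩,
      List.mem_append_right b (List.mem_singleton_self e)⟩
    · exact List.pairwise_append.mpr ⟨hs, List.pairwise_singleton _ _,
        fun x hx y hy => (List.mem_singleton.mp hy).symm ▸ (hbound x hx).2⟩
    · intro x hx
      rcases List.mem_append.mp hx with hx | hx
      · exact hbound x hx
      · rw [List.mem_singleton.mp hx]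
        exact ⟨hke, le_rfl⟩
    · rw [List.getElem_append]
      split_ifs with hi
      · exact hball i hi
      · simp only [List.length_append, List.length_singleton] at h
        simp only [List.getElem_singleton]
        omega

lemma ballotMaxSet_eq_empty {k p e : ℕ} (he : k + p < e) : ballotMaxSet k p e = ∅ :=
  Set.eq_empty_of_forall_notMem fun a ⟨⟨_, _, _, hball⟩, hmem⟩ => by
    obtain ⟨i, hi, rfl⟩ := List.getElem_of_mem hmem
    have := hball i hi
    omega

lemma ncard_ballotSet_lowest (k p : ℕ) : (ballotSet k p (k + 1)).ncard = 1 := by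
  rw [ballotSet_lowest, Set.ncard_singleton]

lemma ncard_ballotSet_succ (k p e : ℕ) :
    (ballotSet k p (e + 1)).ncard = (ballotSet k p e).ncard + (ballotMaxSet k p (e + 1)).ncard := by
  rw [ballotSet_succ_eq_union, Set.ncard_union_eq (disjoint_ballotSet_ballotMaxSet k p e)
    (ballotSet_finite k p e) ((ballotSet_finite k p (e + 1)).subset fun _ h => h.1)]

lemma ncard_ballotMaxSet_succ {k p e : ℕ} (hke : k + 1 ≤ e) (hep : e ≤ k + 1 + p) :
    (ballotMaxSet k (p + 1) e).ncard = (ballotSet k p e).ncard := by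
  rw [ballotMaxSet_succ_eq_image hke hep,
    Set.ncard_image_of_injective _ (List.append_left_injective [e])]

theorem mul_eq_mul_choose_of_ballot_rec {c : ℕ → ℕ → ℕ} (hzero : ∀ q, c q 0 = 0)
    (hone : ∀ d, c 0 (d + 1) = 1) (hrec : ∀ q d, c (q + 1) (d + 1) = c q (d + 2) + c (q + 1) d) :
    ∀ q d, (2 * q + d) * c q d = d * (2 * q + d).choose q
  | 0, 0 => by simp [hzero]
  | 0, d + 1 => by simp [hone]
  | q + 1, 0 => by simp [hzero]
  | q + 1, d + 1 => by
    set N := 2 * q + d + 2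
    have hprev : N * c q (d + 2) = (d + 2) * N.choose q :=
      mul_eq_mul_choose_of_ballot_rec hzero hone hrec q (d + 2)
    have hbelow : N * c (q + 1) d = d * N.choose (q + 1) := by
      have := mul_eq_mul_choose_of_ballot_rec hzero hone hrec (q + 1) d
      rwa [show 2 * (q + 1) + d = N by omega] at this
    have hpascal₁ : (N + 1) * N.choose q = (N + 1).choose (q + 1) * (q + 1) :=
      Nat.add_one_mul_choose_eq N q
    have hpascal₂ : N.choose (q + 1) * (N + 1) = (N + 1).choose (q + 1) * (q + d + 2) := by
      rw [Nat.choose_mul_succ_eq]; congr 1; omega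
    rw [show 2 * (q + 1) + (d + 1) = N + 1 by omega, hrec]
    refine Nat.eq_of_mul_eq_mul_left (show 0 < N by omega) ?_
    linear_combination (N + 1) * hprev + (N + 1) * hbelow + (d + 2) * hpascal₁ + d * hpascal₂

theorem ncard_ballotMaxSet_mul (k : ℕ) : ∀ q d,
    (2 * q + d) * (ballotMaxSet k (q + d) (k + 1 + q)).ncard = d * (2 * q + d).choose q := by
  refine mul_eq_mul_choose_of_ballot_rec (fun q => ?_) (fun d => ?_) (fun q d => ?_)
  · rw [add_zero, ballotMaxSet_eq_empty (by omega), Set.ncard_empty]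
  · rw [zero_add, add_zero, ncard_ballotMaxSet_succ le_rfl (by omega), ncard_ballotSet_lowest]
  · rw [show q + 1 + (d + 1) = q + d + 1 + 1 by omega, show q + (d + 2) = q + d + 1 + 1 by omega,
      show q + 1 + d = q + d + 1 by omega, show k + 1 + (q + 1) = k + 1 + q + 1 by omega,
      ncard_ballotMaxSet_succ (p := q + d + 1) (e := k + 1 + q + 1) (by omega) (by omega),
      ncard_ballotMaxSet_succ (p := q + d + 1) (e := k + 1 + q) (by omega) (by omega),
      ncard_ballotSet_succ]

lemma opMaxLead_eq_ncard_ballotMaxSet {n k l : ℕ} (hn : l ≤ n) :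
    opMaxLead n k l (k + 1) = (ballotMaxSet k n l).ncard := by
  unfold opMaxLead
  congr 1
  ext a
  simp only [ballotMaxSet, ballotSet, IsOrderedPrefSet, IsPrefSet, Set.mem_ofPred_eq]
  constructor
  · rintro ⟨⟨⟨hlen, -⟩, hs⟩, hflaws, hle, hl, hhead⟩
    obtain ⟨r, rfl⟩ := List.head?_eq_some_iff.mp hhead
    have hlow : ∀ x ∈ (k + 1) :: r, k + 1 ≤ x := by
      simpa using (List.pairwise_cons.mp hs).1
    have hball := (flaws_eq_iff_ballot (by have := hlow l hl; omega) hlen hs hlow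
      fun x hx => (hle x hx).trans hn).mp hflaws
    exact ⟨⟨hlen, hs, fun x hx => ⟨hlow x hx, hle x hx⟩, hball⟩, hl⟩
  · rintro ⟨⟨hlen, hs, hbound, hball⟩, hl⟩
    have hhead : a.head? = some (k + 1) := by
      obtain ⟨p, r, rfl⟩ := List.exists_cons_of_ne_nil (List.ne_nil_of_mem hl)
      have h0 : p ≤ k + 1 + 0 := hball 0 (by simp)
      have := hbound p List.mem_cons_self
      simp only [List.head?_cons, Option.some.injEq]
      omega
    have hpref : ∀ x ∈ a, 1 ≤ x ∧ x ≤ n := fun x hx => by have := hbound x hx; omega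
    have hflaws := (flaws_eq_iff_ballot (by have := hbound l hl; omega) hlen hs
      (fun x hx => (hbound x hx).1) fun x hx => (hpref x hx).2).mpr hball
    exact ⟨⟨⟨hlen, hpref⟩, hs⟩, hflaws, fun x hx => (hbound x hx).2, hl, hhead⟩

theorem stmt12 (n k l : ℕ) (hl : k + 1 ≤ l) (hn : l ≤ n) :
    (n + l - k - 1) * opMaxLead n k l (k + 1)
      = (n - l + k + 1) * Nat.choose (n + l - k - 1) (l - k - 1) := by
  obtain ⟨q, rfl⟩ : ∃ q, l = k + 1 + q := ⟨l - k - 1, by omega⟩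
  obtain ⟨d, rfl⟩ : ∃ d, n = q + d := ⟨n - q, by omega⟩
  rw [opMaxLead_eq_ncard_ballotMaxSet hn, show q + d + (k + 1 + q) - k - 1 = 2 * q + d by omega,
    show q + d - (k + 1 + q) + k + 1 = d by omega, show k + 1 + q - k - 1 = q by omega]
  exact ncard_ballotMaxSet_mul k q d
end

section
/- For integers 1 ≤ m ≤ k and n ≥ l ≥ k+1, the number op_{n,k,=l}^m of ordered preference sets (a_1,…,a_n) of length n with exactly k flaws, leading term a_1 = m, and max{a_i : 1 ≤ i ≤ n} = l, satisfies (n−m+k+2)(n+l−m−1) · op_{n,k,=l}^m = [(n−l+2k−m+4)(n−m+k+1) − (l−k−2)] · C(n+l−m−1, l−k−2). -/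
lemma chooseInt_of_neg_s13 (N : ℕ) {b : ℤ} (hb : b < 0) : chooseInt N b = 0 := by
  simp [chooseInt, not_le.mpr hb]

lemma chooseInt_natCast_s13 (N b : ℕ) : chooseInt N b = N.choose b := by
  simp [chooseInt]

lemma chooseInt_succ (N : ℕ) (b : ℤ) :
    chooseInt (N + 1) b = chooseInt N b + chooseInt N (b - 1) := by
  rcases lt_trichotomy b 0 with hb | rfl | hb
  · simp [chooseInt_of_neg_s13 _ hb, chooseInt_of_neg_s13 _ (show b - 1 < 0 by omega)]
  · simp [chooseInt]
  · lift b to ℕ using hb.le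
    obtain ⟨e, rfl⟩ : ∃ e, b = e + 1 := ⟨b - 1, by omega⟩
    rw [show ((e + 1 : ℕ) : ℤ) - 1 = e by push_cast; ring, chooseInt_natCast_s13,
      chooseInt_natCast_s13, chooseInt_natCast_s13, Nat.choose_succ_succ', add_comm]

lemma mul_chooseInt (N : ℕ) (b : ℤ) :
    b * chooseInt N b = (N - b + 1) * chooseInt N (b - 1) := by
  rcases lt_trichotomy b 0 with hb | rfl | hb
  · simp [chooseInt_of_neg_s13 _ hb, chooseInt_of_neg_s13 _ (show b - 1 < 0 by omega)]
  · simp [chooseInt_of_neg_s13 N (show (-1 : ℤ) < 0 by omega)]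
  · lift b to ℕ using hb.le
    obtain ⟨e, rfl⟩ : ∃ e, b = e + 1 := ⟨b - 1, by omega⟩
    rw [show ((e + 1 : ℕ) : ℤ) - 1 = e by push_cast; ring, chooseInt_natCast_s13, chooseInt_natCast_s13]
    rcases le_or_gt e N with he | he
    · have h := Nat.choose_succ_right_eq N e
      zify [he] at h
      push_cast
      linear_combination h
    · simp [Nat.choose_eq_zero_of_lt he, Nat.choose_eq_zero_of_lt (show N < e + 1 by omega)]

lemma firstFree_eq_some {n : ℕ} {occ : Finset ℕ} {x j : ℕ} (hxj : x ≤ j) (hjn : j ≤ n)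
    (hj : j ∉ occ) (hocc : ∀ i, x ≤ i → i < j → i ∈ occ) : firstFree n occ x = some j :=
  List.find?_range'_eq_some.mpr ⟨by simpa using hj, List.mem_range'_1.mpr ⟨hxj, by omega⟩,
    fun i hxi hij => by simpa using hocc i hxi hij⟩

lemma firstFree_eq_none {n : ℕ} {occ : Finset ℕ} {x : ℕ} (hocc : ∀ i, x ≤ i → i ≤ n → i ∈ occ) :
    firstFree n occ x = none := by
  rw [firstFree, List.find?_eq_none]
  intro i hi
  rw [List.mem_range'_1] at hi
  simpa using hocc i hi.1 (by omega)

lemma flawsFrom_eq_length {n : ℕ} {occ : Finset ℕ} {r : List ℕ}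
    (hr : ∀ x ∈ r, firstFree n occ x = none) : flawsFrom n r occ = r.length := by
  induction r with
  | nil => rfl
  | cons x t ih =>
    rw [flawsFrom, hr x List.mem_cons_self, ih fun y hy => hr y (List.mem_cons_of_mem x hy),
      List.length_cons]

/-- Cars with nondecreasing preferences park in increasing order, so all a car needs to know is
the last occupied space `b`: it parks at `max x (b + 1)` if that is at most `n`. -/
def sortedFlaws (n : ℕ) : ℕ → List ℕ → ℕ
  | _, [] => 0
  | b, x :: t => if max x (b + 1) ≤ n then sortedFlaws n (max x (b + 1)) t else t.length + 1

lemma flawsFrom_eq_sortedFlaws {n b : ℕ} {occ : Finset ℕ} {r : List ℕ}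
    (hr : r.Pairwise (· ≤ ·)) (hrn : ∀ x ∈ r, x ≤ n) (hocc : ∀ j ∈ occ, j ≤ b)
    (hfull : ∀ x ∈ r, ∀ j, x ≤ j → j ≤ b → j ∈ occ) :
    flawsFrom n r occ = sortedFlaws n b r := by
  induction r generalizing occ b with
  | nil => rfl
  | cons x t ih =>
    rw [List.pairwise_cons] at hr
    have hxt : ∀ y ∈ x :: t, x ≤ y := by
      simpa using hr.1
    by_cases hB : max x (b + 1) ≤ n
    · have hff : firstFree n occ x = some (max x (b + 1)) :=
        firstFree_eq_some (le_max_left _ _) hB (fun h => by have := hocc _ h; omega)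
          fun j hxj hjB => hfull x List.mem_cons_self j hxj (by omega)
      rw [flawsFrom, hff, sortedFlaws, if_pos hB]
      refine ih hr.2 (fun y hy => hrn y (List.mem_cons_of_mem x hy)) ?_ ?_
      · intro j hj
        rcases Finset.mem_insert.mp hj with rfl | hj
        · exact le_rfl
        · have := hocc j hj; omega
      · intro y hy j hyj hjB
        rcases le_or_gt j b with hjb | hjb
        · exact Finset.mem_insert_of_mem
            (hfull x List.mem_cons_self j (by have := hr.1 y hy; omega) hjb)
        · rw [show j = max x (b + 1) by have := hr.1 y hy; omega]
          exact Finset.mem_insert_self _ _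
    · have hnone : ∀ y ∈ x :: t, firstFree n occ y = none := fun y hy =>
        firstFree_eq_none fun j hyj hjn =>
          hfull x List.mem_cons_self j (by have := hxt y hy; omega)
            (by have := hrn x List.mem_cons_self; omega)
      rw [flawsFrom_eq_length hnone, sortedFlaws, if_neg hB, List.length_cons]

lemma flaws_eq_sortedFlaws {n : ℕ} {a : List ℕ} (ha : a.Pairwise (· ≤ ·))
    (han : ∀ x ∈ a, 1 ≤ x ∧ x ≤ n) : flaws n a = sortedFlaws n 0 a :=
  flawsFrom_eq_sortedFlaws ha (fun x hx => (han x hx).2) (by simp)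
    fun x hx j hxj hj0 => by have := (han x hx).1; omega

/-- `UnderStair d a` says `a[i] ≤ d + i` for every index `i`. -/
def UnderStair : ℕ → List ℕ → Prop
  | _, [] => True
  | d, x :: t => x ≤ d ∧ UnderStair (d + 1) t

lemma underStair_of_forall_le {d : ℕ} {r : List ℕ} (hr : ∀ x ∈ r, x ≤ d) : UnderStair d r := by
  induction r generalizing d with
  | nil => trivial
  | cons x t ih =>
    exact ⟨hr x List.mem_cons_self,
      ih fun y hy => (hr y (List.mem_cons_of_mem x hy)).trans d.le_succ⟩

lemma sortedFlaws_le_length (n b : ℕ) (r : List ℕ) : sortedFlaws n b r ≤ r.length := by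
  induction r generalizing b with
  | nil => exact le_rfl
  | cons x t ih =>
    rw [sortedFlaws]
    split_ifs
    · exact (ih _).trans t.length.le_succ
    · exact le_rfl

lemma add_length_le_of_sortedFlaws_le {n b c : ℕ} {r : List ℕ} (hc : sortedFlaws n b r ≤ c)
    (hr : c < r.length) : b + r.length ≤ n + c := by
  induction r generalizing b with
  | nil => simp at hr
  | cons x t ih =>
    rw [sortedFlaws] at hc
    split_ifs at hc with hB
    · rw [List.length_cons] at hr ⊢
      rcases lt_or_ge c t.length with ht | ht
      · have := ih hc ht; omega
      · omega
    · simp at hc hr; omega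

lemma sortedFlaws_le_iff_underStair {n b c d : ℕ} {r : List ℕ} (hrn : ∀ x ∈ r, x ≤ n)
    (hlen : d + r.length = n + c + 1) (hbd : b < d) :
    sortedFlaws n b r ≤ c ↔ UnderStair d r := by
  induction r generalizing b d with
  | nil => simp [sortedFlaws, UnderStair]
  | cons x t ih =>
    have hxn := hrn x List.mem_cons_self
    have htn : ∀ y ∈ t, y ≤ n := fun y hy => hrn y (List.mem_cons_of_mem x hy)
    rw [List.length_cons] at hlen
    rw [sortedFlaws]
    by_cases hct : t.length < c
    · refine iff_of_true ?_ (underStair_of_forall_le fun y hy => (hrn y hy).trans (by omega))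
      split_ifs
      · exact (sortedFlaws_le_length n _ t).trans hct.le
      · exact hct
    rw [UnderStair]
    by_cases hxd : x ≤ d
    · rw [if_pos (by omega), ih (d := d + 1) htn (by omega) (by omega), and_iff_right hxd]
    refine iff_of_false ?_ fun h => hxd h.1
    split_ifs with hB
    · intro hc
      rcases lt_or_ge c t.length with h | h
      · have := add_length_le_of_sortedFlaws_le hc h; omega
      · omega
    · omega

lemma flaws_le_iff_underStair {n c : ℕ} {a : List ℕ} (ha : IsOrderedPrefSet n a) :
    flaws n a ≤ c ↔ UnderStair (c + 1) a := by
  obtain ⟨⟨hlen, han⟩, hsort⟩ := ha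
  rw [flaws_eq_sortedFlaws hsort han]
  exact sortedFlaws_le_iff_underStair (fun x hx => (han x hx).2) (by omega) c.succ_pos

lemma List.Pairwise.exists_eq_cons {α : Type*} [PartialOrder α] {a : List α} {m : α}
    (ha : a.Pairwise (· ≤ ·)) (hm : m ∈ a) (hle : ∀ x ∈ a, m ≤ x) : ∃ t, a = m :: t := by
  obtain _ | ⟨x, t⟩ := a
  · simp at hm
  · refine ⟨t, ?_⟩
    rcases List.mem_cons.mp hm with rfl | hmt
    · rfl
    · rw [le_antisymm (hle x List.mem_cons_self) (List.rel_of_pairwise_cons ha hmt)]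

def stairLists (l len d m : ℕ) : Set (List ℕ) :=
  {a | a.length = len ∧ a.Pairwise (· ≤ ·) ∧ (∀ x ∈ a, m ≤ x ∧ x ≤ l) ∧ l ∈ a ∧ UnderStair d a}

lemma stairLists_finite (l len d m : ℕ) : (stairLists l len d m).Finite := by
  refine ((List.finite_length_eq (Fin (l + 1)) len).image (List.map Fin.val)).subset ?_
  rintro a ⟨hlen, -, hal, -⟩
  refine ⟨a.pmap (fun x hx => (⟨x, Nat.lt_succ_of_le hx⟩ : Fin (l + 1)))
    fun x hx => (hal x hx).2, by simpa using hlen, ?_⟩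
  simp [List.map_pmap]

lemma cons_mem_stairLists {l len d m : ℕ} {t : List ℕ} (hml : m < l) :
    m :: t ∈ stairLists l (len + 1) d m ↔ m ≤ d ∧ t ∈ stairLists l len (d + 1) m := by
  simp only [stairLists, Set.mem_ofPred_eq, List.length_cons, List.pairwise_cons,
    List.forall_mem_cons, le_refl, hml.le, true_and, UnderStair, Nat.add_right_cancel_iff]
  simp only [List.mem_cons, hml.ne', false_or]
  constructor
  · rintro ⟨hlen, ⟨-, hsort⟩, hbd, hl, hmd, hst⟩
    exact ⟨hmd, hlen, hsort, hbd, hl, hst⟩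
  · rintro ⟨hmd, hlen, hsort, hbd, hl, hst⟩
    exact ⟨hlen, ⟨fun x hx => (hbd x hx).1, hsort⟩, hbd, hl, hmd, hst⟩

lemma stairLists_eq_union {l len d m : ℕ} (hml : m < l) (hmd : m ≤ d) :
    stairLists l (len + 1) d m =
      stairLists l (len + 1) d (m + 1) ∪ (m :: ·) '' stairLists l len (d + 1) m := by
  ext a
  constructor
  · intro ha
    by_cases hma : m ∈ a
    · obtain ⟨t, rfl⟩ := ha.2.1.exists_eq_cons hma fun x hx => (ha.2.2.1 x hx).1
      exact Or.inr ⟨t, ((cons_mem_stairLists hml).mp ha).2, rfl⟩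
    · obtain ⟨hlen, hsort, hbd, hl, hst⟩ := ha
      refine Or.inl ⟨hlen, hsort, fun x hx => ⟨?_, (hbd x hx).2⟩, hl, hst⟩
      have := (hbd x hx).1
      have : x ≠ m := fun h => hma (h ▸ hx)
      omega
  · rintro (⟨hlen, hsort, hbd, hl, hst⟩ | ⟨t, ht, rfl⟩)
    · exact ⟨hlen, hsort, fun x hx => ⟨(hbd x hx).1.trans' m.le_succ, (hbd x hx).2⟩, hl, hst⟩
    · exact (cons_mem_stairLists hml).mpr ⟨hmd, ht⟩

lemma ncard_stairLists_succ {l len d m : ℕ} (hml : m < l) (hmd : m ≤ d) :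
    (stairLists l (len + 1) d m).ncard =
      (stairLists l (len + 1) d (m + 1)).ncard + (stairLists l len (d + 1) m).ncard := by
  have hdisj : Disjoint (stairLists l (len + 1) d (m + 1))
      ((m :: ·) '' stairLists l len (d + 1) m) := by
    rw [Set.disjoint_left]
    rintro _ ⟨-, -, hbd, -⟩ ⟨t, -, rfl⟩
    have := (hbd m List.mem_cons_self).1
    omega
  rw [stairLists_eq_union hml hmd, Set.ncard_union_eq hdisj (stairLists_finite _ _ _ _)
    ((stairLists_finite _ _ _ _).image _), Set.ncard_image_of_injective _ List.cons_injective]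

lemma stairLists_eq_empty {l j d m : ℕ} (hdm : d < m) : stairLists l (j + 1) d m = ∅ := by
  refine Set.eq_empty_of_forall_notMem fun a ⟨hlen, _, hbd, _, hst⟩ => ?_
  obtain _ | ⟨x, t⟩ := a
  · simp at hlen
  · have := (hbd x List.mem_cons_self).1
    have := hst.1
    omega

lemma stairLists_self {l j d : ℕ} (hld : l ≤ d) :
    stairLists l (j + 1) d l = {List.replicate (j + 1) l} := by
  ext a
  simp only [stairLists, Set.mem_ofPred_eq, Set.mem_singleton_iff]
  constructor
  · rintro ⟨hlen, -, hbd, -⟩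
    exact List.eq_replicate_iff.mpr ⟨hlen, fun x hx => le_antisymm (hbd x hx).2 (hbd x hx).1⟩
  · rintro rfl
    refine ⟨List.length_replicate, List.pairwise_replicate.mpr (Or.inr le_rfl), ?_,
      List.mem_replicate.mpr ⟨j.succ_ne_zero, rfl⟩, underStair_of_forall_le fun x hx => ?_⟩
    · intro x hx
      rw [(List.mem_replicate.mp hx).2]
      exact ⟨le_rfl, le_rfl⟩
    · rw [(List.mem_replicate.mp hx).2]
      exact hld

lemma stairLists_one {l d m : ℕ} (hml : m ≤ l) (hld : l ≤ d) : stairLists l 1 d m = {[l]} := by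
  ext a
  simp only [stairLists, Set.mem_ofPred_eq, Set.mem_singleton_iff, List.length_eq_one_iff]
  constructor
  · rintro ⟨⟨x, rfl⟩, -, -, hl, -⟩
    rw [List.mem_singleton.mp hl]
  · rintro rfl
    exact ⟨⟨l, rfl⟩, List.pairwise_singleton _ _, by simpa using hml, List.mem_singleton_self l,
      hld, trivial⟩

theorem ncard_stairLists_add_chooseInt (l d m j : ℕ) (hml : m ≤ l) (hmd : m ≤ d + 1)
    (hld : l ≤ d + j) :
    (stairLists l (j + 1) d m).ncard + chooseInt (j + (l - m)) ((l : ℤ) - d - 1) =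
      (j + (l - m)).choose (l - m) := by
  rcases hmd.eq_or_lt with rfl | hmd
  · rw [stairLists_eq_empty (Nat.lt_succ_self d), Set.ncard_empty, zero_add,
      show (l : ℤ) - d - 1 = (l - (d + 1) : ℕ) by omega, chooseInt_natCast_s13]
  have hmd : m ≤ d := Nat.lt_succ_iff.mp hmd
  rcases hml.eq_or_lt with rfl | hml
  · rw [stairLists_self hmd, Set.ncard_singleton, chooseInt_of_neg_s13 _ (by omega), Nat.sub_self,
      Nat.choose_zero_right]
  rcases Nat.eq_zero_or_pos j with rfl | hj
  · rw [stairLists_one hml.le (by omega), Set.ncard_singleton, chooseInt_of_neg_s13 _ (by omega),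
      zero_add, Nat.choose_self]
  obtain ⟨j, rfl⟩ : ∃ i, j = i + 1 := ⟨j - 1, by omega⟩
  obtain ⟨e, he⟩ : ∃ e, l - m = e + 1 := ⟨l - m - 1, by omega⟩
  have ih₁ := ncard_stairLists_add_chooseInt l d (m + 1) (j + 1) hml (by omega) (by omega)
  have ih₂ := ncard_stairLists_add_chooseInt l (d + 1) m j hml.le (by omega) (by omega)
  rw [show l - (m + 1) = e by omega] at ih₁
  rw [he, show j + (e + 1) = j + 1 + e by omega] at ih₂
  push_cast at ih₂
  rw [show (l : ℤ) - (d + 1) - 1 = (l : ℤ) - d - 1 - 1 by ring] at ih₂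
  rw [ncard_stairLists_succ hml hmd, he, show j + 1 + (e + 1) = j + 1 + e + 1 by omega,
    chooseInt_succ, Nat.choose_succ_succ']
  omega
termination_by j + (l - m)

/-- The ordered preference sets counted by `op_{n,≤c,=l}^m`. -/
def prefSetsLeMaxLead (n c l m : ℕ) : Set (List ℕ) :=
  {a | IsOrderedPrefSet n a ∧ flaws n a ≤ c ∧ (∀ x ∈ a, x ≤ l) ∧ l ∈ a ∧ a.head? = some m}

lemma prefSetsLeMaxLead_eq_image {n c l m : ℕ} (hm : 1 ≤ m) (hml : m < l) (hmc : m ≤ c + 1)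
    (hln : l ≤ n) :
    prefSetsLeMaxLead n c l m = (m :: ·) '' stairLists l (n - 1) (c + 2) m := by
  have hn : n - 1 + 1 = n := by omega
  ext a
  constructor
  · rintro ⟨ha, hfl, hal, hl, hhead⟩
    obtain ⟨t, rfl⟩ := List.head?_eq_some_iff.mp hhead
    have hmx : ∀ x ∈ m :: t, m ≤ x :=
      List.forall_mem_cons.mpr ⟨le_rfl, fun x hx => List.rel_of_pairwise_cons ha.2 hx⟩
    have hmt : m :: t ∈ stairLists l (n - 1 + 1) (c + 1) m :=
      ⟨by rw [hn]; exact ha.1.1, ha.2, fun x hx => ⟨hmx x hx, hal x hx⟩, hl,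
        (flaws_le_iff_underStair ha).mp hfl⟩
    exact ⟨t, ((cons_mem_stairLists hml).mp hmt).2, rfl⟩
  · rintro ⟨t, ht, rfl⟩
    obtain ⟨hlen, hsort, hbd, hl, hst⟩ :=
      (cons_mem_stairLists (len := n - 1) (d := c + 1) hml).mpr ⟨hmc, ht⟩
    have ha : IsOrderedPrefSet n (m :: t) :=
      ⟨⟨by omega, fun x hx => ⟨hm.trans (hbd x hx).1, (hbd x hx).2.trans hln⟩⟩, hsort⟩
    exact ⟨ha, (flaws_le_iff_underStair ha).mpr hst, fun x hx => (hbd x hx).2, hl, rfl⟩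

lemma ncard_prefSetsLeMaxLead_add_chooseInt {n c l m : ℕ} (hm : 1 ≤ m) (hml : m < l)
    (hmc : m ≤ c + 1) (hln : l ≤ n) :
    (prefSetsLeMaxLead n c l m).ncard + chooseInt (n + l - m - 2) ((l : ℤ) - c - 3) =
      (n + l - m - 2).choose (l - m) := by
  have hcount := ncard_stairLists_add_chooseInt l (c + 2) m (n - 2) hml.le (by omega) (by omega)
  rw [show n - 2 + 1 = n - 1 by omega, show n - 2 + (l - m) = n + l - m - 2 by omega,
    show (l : ℤ) - (c + 2 : ℕ) - 1 = l - c - 3 by push_cast; ring] at hcount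
  rwa [prefSetsLeMaxLead_eq_image hm hml hmc hln,
    Set.ncard_image_of_injective _ List.cons_injective]

lemma opMaxLead_add_chooseInt {n k l m : ℕ} (hm : 1 ≤ m) (hmk : m ≤ k) (hl : k + 1 ≤ l)
    (hn : l ≤ n) :
    opMaxLead n k l m + chooseInt (n + l - m - 2) ((l : ℤ) - k - 3) =
      chooseInt (n + l - m - 2) ((l : ℤ) - k - 2) := by
  have hsub : prefSetsLeMaxLead n (k - 1) l m ⊆ prefSetsLeMaxLead n k l m :=
    fun a ⟨ha, hfl, hrest⟩ => ⟨ha, hfl.trans (Nat.sub_le k 1), hrest⟩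
  have hdiff : {a | IsOrderedPrefSet n a ∧ flaws n a = k ∧ (∀ x ∈ a, x ≤ l) ∧ l ∈ a ∧
      a.head? = some m} = prefSetsLeMaxLead n k l m \ prefSetsLeMaxLead n (k - 1) l m := by
    ext a
    simp only [prefSetsLeMaxLead, Set.mem_sdiff, Set.mem_ofPred_eq]
    constructor
    · rintro ⟨ha, hfl, hrest⟩
      exact ⟨⟨ha, hfl.le, hrest⟩, fun h => by omega⟩
    · rintro ⟨⟨ha, hfl, hrest⟩, hnot⟩
      exact ⟨ha, by by_contra h; exact hnot ⟨ha, by omega, hrest⟩, hrest⟩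
  have hcard := Set.ncard_sdiff_add_ncard_of_subset hsub
    ((prefSetsLeMaxLead_eq_image (c := k) hm (by omega) (by omega) hn).symm ▸
      (stairLists_finite _ _ _ _).image _)
  have hk := ncard_prefSetsLeMaxLead_add_chooseInt hm (by omega) (by omega : m ≤ k + 1) hn
  have hk' := ncard_prefSetsLeMaxLead_add_chooseInt hm (by omega) (by omega : m ≤ k - 1 + 1) hn
  rw [show (l : ℤ) - ((k - 1 : ℕ) : ℤ) - 3 = l - k - 2 by omega] at hk'
  rw [opMaxLead, hdiff]
  omega

theorem stmt13 (n k l m : ℕ) (hm : 1 ≤ m) (hmk : m ≤ k) (hl : k + 1 ≤ l) (hn : l ≤ n) :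
    (n - m + k + 2) * (n + l - m - 1) * opMaxLead n k l m
      = ((n - l + 2 * k - m + 4) * (n - m + k + 1) - (l - k - 2)) *
          chooseInt (n + l - m - 1) ((l : ℤ) - k - 2) := by
  have hop := opMaxLead_add_chooseInt hm hmk hl hn
  have habs := mul_chooseInt (n + l - m - 2) ((l : ℤ) - k - 2)
  rw [show n + l - m - 1 = n + l - m - 2 + 1 by omega, chooseInt_succ]
  rw [show (l : ℤ) - k - 2 - 1 = l - k - 3 by ring] at habs ⊢
  rcases hl.eq_or_lt with rfl | hl
  · rw [chooseInt_of_neg_s13 _ (by omega), chooseInt_of_neg_s13 _ (by omega)] at hop ⊢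
    rw [show opMaxLead n k (k + 1) m = 0 by omega, mul_zero, add_zero, mul_zero]
  have hcoeff : n - m + k + 1 ≤ (n - l + 2 * k - m + 4) * (n - m + k + 1) :=
    Nat.le_mul_of_pos_left _ (by omega)
  zify [hn, show m ≤ n by omega, show m ≤ n - l + 2 * k by omega, show k ≤ l by omega,
    show 2 ≤ l - k by omega, show 2 ≤ n + l - m by omega, show m ≤ n + l by omega,
    show l - k - 2 ≤ (n - l + 2 * k - m + 4) * (n - m + k + 1) by omega] at hop habs ⊢
  linear_combination
    ((n : ℤ) - m + k + 2) * (n + l - m - 1) * hop + 2 * ((n : ℤ) - m + k + 2) * habs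
end

section
/- For integers 1 ≤ m ≤ k and n ≥ l ≥ k+1, op_{n,k,=l}^m = Σ_{j=m+1}^{k+1} Σ_{i=1}^{n−k} c_i · op_{n−i,k,=l−i}^j, where c_i is the i-th Catalan number. -/
/-!
Let `a` be an ordered preference set with leading term `m`, and let `i` be the first index
(counting from `0`) with `a[i] > m + i`. The first `i` cars form an ordered parking function on
the spaces `m, …, m + i - 1` (`catalan i` choices) and park there without flaws. All later cars
prefer spaces beyond these, so they behave exactly like the preference set
`(a[i] - i, a[i+1] - i, …)` of length `n - i`: it has the same `k` flaws, maximal entry `l - i`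
and leading term `j = a[i] - i > m`. Cars preferring `j` or more can only use `n - i - j + 1`
spaces, so `j ≤ k + 1`; the leading car always parks, so `i ≤ n - k`; and `i < n` exists, since
otherwise the cars fill `m, …, n` and only `m - 1 < k` of them fail.
-/

section Parking

variable {n : ℕ} {occ : Finset ℕ} {p q : ℕ}

lemma firstFree_eq_some_s17 (hpq : p ≤ q) (hqn : q ≤ n) (hq : q ∉ occ)
    (hlt : ∀ r, p ≤ r → r < q → r ∈ occ) : firstFree n occ p = some q := by
  rw [firstFree, List.find?_eq_some_iff_getElem]
  refine ⟨by simpa, q - p, by simp; omega, by simp; omega, fun t ht => ?_⟩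
  simp [hlt (p + t) (by omega) (by omega)]

lemma le_and_notMem_of_firstFree_eq_some (h : firstFree n occ p = some q) :
    p ≤ q ∧ q ≤ n ∧ q ∉ occ := by
  have hmem := List.mem_range'_1.1 (List.mem_of_find?_eq_some h)
  have hq := List.find?_some h
  simp only [decide_eq_true_eq] at hq
  exact ⟨hmem.1, by omega, hq⟩

lemma firstFree_add {i : ℕ} (low : Finset ℕ) (hi : i ≤ n) (hlow : ∀ x ∈ low, x < p + i) :
    firstFree n (low ∪ occ.image (· + i)) (p + i) = (firstFree (n - i) occ p).map (· + i) := by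
  have hrange : List.range' (p + i) (n + 1 - (p + i)) =
      (List.range' p (n - i + 1 - p)).map (i + ·) := by
    rw [List.map_add_range']
    congr 1 <;> omega
  rw [firstFree, firstFree, hrange, List.find?_map,
    List.find?_congr (p₂ := fun j => decide (j ∉ occ))]
  · congr 1; funext x; omega
  · intro x hx
    have hpx := (List.mem_range'_1.1 hx).1
    simp only [Function.comp_apply, Finset.mem_union, Finset.mem_image, decide_eq_decide]
    constructor
    · exact fun h hx => h (Or.inr ⟨x, hx, add_comm _ _⟩)
    · rintro h (hl | ⟨y, hy, hyx⟩)
      · have := hlow _ hl; omega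
      · exact h (by rwa [show y = x by omega] at hy)

lemma flawsFrom_cons_of_none (rest : List ℕ) (h : firstFree n occ p = none) :
    flawsFrom n (p :: rest) occ = flawsFrom n rest occ + 1 := by
  simp only [flawsFrom, h]

lemma flawsFrom_cons_of_some (rest : List ℕ) (h : firstFree n occ p = some q) :
    flawsFrom n (p :: rest) occ = flawsFrom n rest (insert q occ) := by
  simp only [flawsFrom, h]

lemma flawsFrom_le_length (ys : List ℕ) (occ : Finset ℕ) : flawsFrom n ys occ ≤ ys.length := by
  induction ys generalizing occ with
  | nil => simp [flawsFrom]
  | cons p rest ih =>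
    cases hff : firstFree n occ p with
    | none => rw [flawsFrom_cons_of_none _ hff, List.length_cons]; exact Nat.succ_le_succ (ih occ)
    | some q => rw [flawsFrom_cons_of_some _ hff, List.length_cons]; exact (ih _).trans (by omega)

/-- Each car that parks takes a free space of `[j, n]`. -/
lemma length_le_flawsFrom_add_card {j : ℕ} (ys : List ℕ) (occ : Finset ℕ)
    (hys : ∀ y ∈ ys, j ≤ y) : ys.length ≤ flawsFrom n ys occ + (Finset.Icc j n \ occ).card := by
  induction ys generalizing occ with
  | nil => simp
  | cons p rest ih =>
    have hrest := fun occ => ih occ (fun y hy => hys y (List.mem_cons_of_mem p hy))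
    cases hff : firstFree n occ p with
    | none =>
      rw [flawsFrom_cons_of_none _ hff, List.length_cons]
      linarith [hrest occ]
    | some q =>
      obtain ⟨hpq, hqn, hq⟩ := le_and_notMem_of_firstFree_eq_some hff
      have hqIcc : q ∈ Finset.Icc j n \ occ := by
        simp [hq, hqn, (hys p List.mem_cons_self).trans hpq]
      have hpos := Finset.card_pos.2 ⟨q, hqIcc⟩
      have h := hrest (insert q occ)
      rw [Finset.sdiff_insert, Finset.card_erase_of_mem hqIcc] at h
      rw [flawsFrom_cons_of_some _ hff, List.length_cons]
      omega

/-- Cars whose `t`-th preference lies in `[m, c + t]` fill the spaces `c, c + 1, …` in turn. -/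
lemma flawsFrom_append_of_fills {m c : ℕ} {xs : List ℕ} (zs : List ℕ) (hmc : m ≤ c)
    (hlen : c + xs.length ≤ n + 1) (hxs : ∀ t (h : t < xs.length), m ≤ xs[t] ∧ xs[t] ≤ c + t) :
    flawsFrom n (xs ++ zs) (Finset.Ico m c) = flawsFrom n zs (Finset.Ico m (c + xs.length)) := by
  induction xs generalizing c with
  | nil => simp
  | cons p rest ih =>
    have hp := hxs 0 (by simp)
    simp only [List.getElem_cons_zero] at hp
    have hff : firstFree n (Finset.Ico m c) p = some c :=
      firstFree_eq_some_s17 hp.2 (by simp at hlen; omega) (by simp)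
        (fun r hpr hrc => Finset.mem_Ico.2 ⟨by omega, hrc⟩)
    rw [List.cons_append, flawsFrom_cons_of_some _ hff, ← Nat.Ico_succ_right_eq_insert_Ico hmc,
      ih (by omega) (by simp at hlen; omega)]
    · simp [Nat.succ_eq_add_one, add_assoc, add_comm 1]
    · intro t ht
      have := hxs (t + 1) (by simpa using ht)
      simp only [List.getElem_cons_succ] at this
      omega

lemma flawsFrom_map_add {i : ℕ} (hi : i ≤ n) (low : Finset ℕ) (ys : List ℕ) (occ : Finset ℕ)
    (hlow : ∀ x ∈ low, ∀ y ∈ ys, x < y + i) :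
    flawsFrom n (ys.map (· + i)) (low ∪ occ.image (· + i)) = flawsFrom (n - i) ys occ := by
  induction ys generalizing occ with
  | nil => simp [flawsFrom]
  | cons p rest ih =>
    have hrest := fun occ => ih occ (fun x hx y hy => hlow x hx y (List.mem_cons_of_mem p hy))
    have hshift := firstFree_add (occ := occ) low hi (fun x hx => hlow x hx p List.mem_cons_self)
    rw [List.map_cons]
    cases hff : firstFree (n - i) occ p with
    | none =>
      rw [hff, Option.map_none] at hshift
      rw [flawsFrom_cons_of_none _ hshift, flawsFrom_cons_of_none _ hff, hrest]
    | some q =>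
      rw [hff, Option.map_some] at hshift
      rw [flawsFrom_cons_of_some _ hshift, flawsFrom_cons_of_some _ hff, ← hrest,
        Finset.image_insert, Finset.union_insert]

end Parking

lemma le_of_mem_of_head?_eq {l : List ℕ} {j x : ℕ} (hl : l.Pairwise (· ≤ ·))
    (hj : l.head? = some j) (hx : x ∈ l) : j ≤ x := by
  cases l with
  | nil => simp at hj
  | cons a l =>
    obtain rfl : a = j := by simpa using hj
    rcases List.mem_cons.1 hx with rfl | hx
    · exact le_rfl
    · exact List.rel_of_pairwise_cons hl hx

lemma finite_setOf_length_eq_forall_le (N B : ℕ) :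
    {a : List ℕ | a.length = N ∧ ∀ x ∈ a, x ≤ B}.Finite := by
  refine ((List.finite_length_eq (Fin (B + 1)) N).image (List.map Fin.val)).subset ?_
  rintro a ⟨hlen, hle⟩
  refine ⟨a.map (Fin.ofNat (B + 1)), by simpa using hlen, ?_⟩
  rw [List.map_map]
  conv_rhs => rw [← List.map_id a]
  exact List.map_congr_left fun x hx => by simp [Nat.mod_eq_of_lt (Nat.lt_succ_of_le (hle x hx))]

lemma ncard_biUnion_finset {ι α : Type*} {t : Finset ι} {s : ι → Set α}
    (hs : ∀ i ∈ t, (s i).Finite) (h : (t : Set ι).PairwiseDisjoint s) :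
    (⋃ i ∈ t, s i).ncard = ∑ i ∈ t, (s i).ncard := by
  rw [← Finset.set_biUnion_coe, t.finite_toSet.ncard_biUnion hs h, finsum_mem_coe_finset]

section ShiftAppend

def shiftAppend (s : ℕ) (xs ys : List ℕ) : List ℕ := xs ++ ys.map (· + s)

variable {s : ℕ} {xs xs' ys ys' : List ℕ}

@[simp]
lemma length_shiftAppend : (shiftAppend s xs ys).length = xs.length + ys.length := by
  simp [shiftAppend]

lemma mem_shiftAppend {x : ℕ} : x ∈ shiftAppend s xs ys ↔ x ∈ xs ∨ ∃ y ∈ ys, y + s = x := by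
  simp [shiftAppend]

lemma shiftAppend_inj (h : xs.length = xs'.length) :
    shiftAppend s xs ys = shiftAppend s xs' ys' ↔ xs = xs' ∧ ys = ys' := by
  refine ⟨fun he => ?_, by rintro ⟨rfl, rfl⟩; rfl⟩
  obtain ⟨rfl, hys⟩ := List.append_inj he h
  exact ⟨rfl, List.map_injective_iff.2 (add_left_injective s) hys⟩

lemma pairwise_shiftAppend (hxs : xs.Pairwise (· ≤ ·)) (hys : ys.Pairwise (· ≤ ·))
    (h : ∀ x ∈ xs, ∀ y ∈ ys, x ≤ y + s) : (shiftAppend s xs ys).Pairwise (· ≤ ·) := by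
  refine List.pairwise_append.2 ⟨hxs, List.pairwise_map.2 (hys.imp (by omega)), ?_⟩
  simpa using h

lemma forall_getElem_shiftAppend {P : ℕ → ℕ → Prop} :
    (∀ t (h : t < (shiftAppend s xs ys).length), P t (shiftAppend s xs ys)[t]) ↔
      (∀ t (h : t < xs.length), P t xs[t]) ∧
        ∀ u (h : u < ys.length), P (xs.length + u) (ys[u] + s) := by
  simp only [shiftAppend, List.getElem_append, List.getElem_map, List.length_append,
    List.length_map]
  refine ⟨fun h => ⟨fun t ht => ?_, fun u hu => ?_⟩, fun ⟨h₁, h₂⟩ t ht => ?_⟩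
  · simpa [ht] using h t (by omega)
  · simpa using h (xs.length + u) (by omega)
  · split_ifs with hlt
    · exact h₁ t hlt
    · simpa [Nat.add_sub_cancel' (not_lt.1 hlt)] using h₂ (t - xs.length) (by omega)

end ShiftAppend

lemma ncard_image_shiftAppend {s : ℕ} {A B : Set (List ℕ)} (hA : ∀ xs ∈ A, xs.length = s) :
    (Function.uncurry (shiftAppend s) '' (A ×ˢ B)).ncard = A.ncard * B.ncard := by
  rw [Set.InjOn.ncard_image, Set.ncard_prod]
  rintro ⟨xs, ys⟩ ⟨hxs, -⟩ ⟨xs', ys'⟩ ⟨hxs', -⟩ h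
  simpa [Prod.ext_iff] using (shiftAppend_inj ((hA xs hxs).trans (hA xs' hxs').symm)).1 h

section OrderedParking

/-- Ordered parking functions of length `i` on the spaces `m, …, m + i - 1`. -/
def orderedParking (m i : ℕ) : Set (List ℕ) :=
  {b | b.length = i ∧ b.Pairwise (· ≤ ·) ∧ ∀ t (h : t < b.length), m ≤ b[t] ∧ b[t] ≤ m + t}

variable {m i : ℕ} {b : List ℕ}

lemma bounds_of_mem_orderedParking (hb : b ∈ orderedParking m i) {x : ℕ} (hx : x ∈ b) :
    m ≤ x ∧ x < m + i := by
  obtain ⟨t, ht, rfl⟩ := List.mem_iff_getElem.1 hx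
  have := hb.2.2 t ht
  have := hb.1
  omega

lemma head?_eq_of_mem_orderedParking (hb : b ∈ orderedParking m i) (hi : 0 < i) :
    b.head? = some m := by
  obtain ⟨hlen, -, hbd⟩ := hb
  cases b with
  | nil => simp at hlen; omega
  | cons x b =>
    have := hbd 0 (by simp)
    simp only [List.getElem_cons_zero, add_zero] at this
    simp [le_antisymm this.2 this.1]

lemma orderedParking_finite (m i : ℕ) : (orderedParking m i).Finite :=
  (finite_setOf_length_eq_forall_le i (m + i)).subset fun _ hb =>
    ⟨hb.1, fun _ hx => (bounds_of_mem_orderedParking hb hx).2.le⟩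

/-- Split a nondecreasing list at the first index `i` with `a[i] > m + i`. -/
lemma exists_shiftAppend_of_pairwise {a : List ℕ} (ha : a.Pairwise (· ≤ ·))
    (hm : ∀ x ∈ a, m ≤ x) : ∃ i xs ys, xs ∈ orderedParking m i ∧ ys.Pairwise (· ≤ ·) ∧
      (∀ y ∈ ys, m < y) ∧ a = shiftAppend i xs ys := by
  classical
  have hex : ∃ i, ∀ h : i < a.length, m + i < a[i] := ⟨a.length, fun h => absurd h (lt_irrefl _)⟩
  set i := Nat.find hex
  have hi : i ≤ a.length := Nat.find_min' hex fun h => absurd h (lt_irrefl _)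
  have hbefore : ∀ t (h : t < a.length), t < i → a[t] ≤ m + t := fun t h hti => by
    obtain ⟨_, h⟩ := not_forall.1 (Nat.find_min hex hti)
    exact not_lt.1 h
  have hafter : ∀ x ∈ a.drop i, m + i < x := by
    intro x hx
    have hlt : i < a.length := by
      by_contra! h; simp [List.drop_eq_nil_of_le h] at hx
    have hhead : (a.drop i).head? = some a[i] := by simp [List.head?_drop]
    exact (Nat.find_spec hex hlt).trans_le
      (le_of_mem_of_head?_eq (ha.sublist (List.drop_sublist i a)) hhead hx)
  refine ⟨i, a.take i, (a.drop i).map (· - i), ⟨by simp [hi], ha.sublist (List.take_sublist _ _),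
    fun t ht => ?_⟩, List.pairwise_map.2 ((ha.sublist (List.drop_sublist _ _)).imp (by omega)),
    fun y hy => ?_, ?_⟩
  · simp only [List.length_take, lt_min_iff] at ht
    simpa using ⟨hm _ (List.getElem_mem _), hbefore t _ ht.1⟩
  · obtain ⟨x, hx, rfl⟩ := List.mem_map.1 hy
    have := hafter x hx
    omega
  · rw [shiftAppend, List.map_map, List.map_congr_left (g := id) fun x hx => ?_, List.map_id,
      List.take_append_drop]
    have := hafter x hx
    simp only [Function.comp_apply, id_eq]
    omega

lemma le_of_shiftAppend_eq {i' : ℕ} {xs xs' ys ys' : List ℕ} (hxs : xs.length = i)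
    (hxs' : xs' ∈ orderedParking m i') (hys : ∀ y ∈ ys, m < y)
    (h : shiftAppend i xs ys = shiftAppend i' xs' ys') : i' ≤ i := by
  by_contra! hlt
  have hlen := congrArg List.length h
  simp only [length_shiftAppend, hxs] at hlen
  have hxl' := hxs'.1
  have hy : 0 < ys.length := by omega
  have he : (shiftAppend i xs ys)[i]? = (shiftAppend i' xs' ys')[i]? := by rw [h]
  rw [shiftAppend, shiftAppend, List.getElem?_append_right (by omega),
    List.getElem?_append_left (by omega), hxs, Nat.sub_self, List.getElem?_map,
    List.getElem?_eq_getElem hy, List.getElem?_eq_getElem (by omega)] at he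
  have := hys _ (List.getElem_mem hy)
  have := (hxs'.2.2 i (by omega)).2
  simp only [Option.map_some, Option.some.injEq] at he
  omega

lemma shiftAppend_eq_shiftAppend {i' : ℕ} {xs xs' ys ys' : List ℕ}
    (hxs : xs ∈ orderedParking m i) (hxs' : xs' ∈ orderedParking m i')
    (hys : ∀ y ∈ ys, m < y) (hys' : ∀ y ∈ ys', m < y)
    (h : shiftAppend i xs ys = shiftAppend i' xs' ys') : i = i' ∧ xs = xs' ∧ ys = ys' := by
  obtain rfl := le_antisymm (le_of_shiftAppend_eq hxs'.1 hxs hys' h.symm)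
    (le_of_shiftAppend_eq hxs.1 hxs' hys h)
  exact ⟨rfl, (shiftAppend_inj (hxs.1.trans hxs'.1.symm)).1 h⟩

lemma flaws_shiftAppend {n : ℕ} {xs ys : List ℕ} (hxs : xs ∈ orderedParking m i)
    (hys : ∀ y ∈ ys, m ≤ y) (hmi : m + i ≤ n) :
    flaws n (shiftAppend i xs ys) = flaws (n - i) ys := by
  have hfill := flawsFrom_append_of_fills (n := n) (ys.map (· + i)) le_rfl
    (by rw [hxs.1]; omega) hxs.2.2
  rw [Finset.Ico_self, hxs.1] at hfill
  rw [flaws, flaws, shiftAppend, hfill,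
    ← flawsFrom_map_add (by omega) (Finset.Ico m (m + i)) ys ∅]
  · simp
  · intro x hx y hy
    have := hys y hy
    simp only [Finset.mem_Ico] at hx
    omega

lemma flaws_le_of_mem_orderedParking {n : ℕ} (ha : b ∈ orderedParking m n) :
    flaws n b ≤ m - 1 := by
  rcases le_or_gt m n with hmn | hnm
  · have hbd : ∀ t (h : t < (b.take (n + 1 - m)).length), m ≤ (b.take (n + 1 - m))[t] ∧
        (b.take (n + 1 - m))[t] ≤ m + t := fun t ht => by
      simpa using ha.2.2 t (by simp at ht; omega)
    rw [flaws, ← List.take_append_drop (n + 1 - m) b, ← Finset.Ico_self m,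
      flawsFrom_append_of_fills _ le_rfl (by simp [ha.1]; omega) hbd]
    refine (flawsFrom_le_length _ _).trans ?_
    simp [ha.1]
    omega
  · exact (flawsFrom_le_length b ∅).trans (by rw [ha.1]; omega)

end OrderedParking

section Catalan

open Finset

variable {m : ℕ}

lemma cons_shiftAppend_mem_orderedParking {s r : ℕ} {xs ys : List ℕ}
    (hxs : xs ∈ orderedParking m s) (hys : ys ∈ orderedParking (m + 1) r) :
    m :: shiftAppend s xs ys ∈ orderedParking m (s + r + 1) := by
  have hxb := fun {x} (hx : x ∈ xs) => bounds_of_mem_orderedParking hxs hx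
  have hyb := fun {y} (hy : y ∈ ys) => bounds_of_mem_orderedParking hys hy
  have hbd : ∀ t (h : t < (shiftAppend s xs ys).length),
      m ≤ (shiftAppend s xs ys)[t] ∧ (shiftAppend s xs ys)[t] ≤ m + (t + 1) := by
    refine (forall_getElem_shiftAppend (P := fun t x => m ≤ x ∧ x ≤ m + (t + 1))).2
      ⟨fun t ht => ?_, fun u hu => ?_⟩
    · have := hxs.2.2 t ht; omega
    · have := hys.2.2 u hu; have := hxs.1; omega
  refine ⟨by simp [hxs.1, hys.1], List.pairwise_cons.2 ⟨fun x hx => ?_,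
    pairwise_shiftAppend hxs.2.1 hys.2.1 fun x hx' y hy' => ?_⟩, ?_⟩
  · rcases mem_shiftAppend.1 hx with hx | ⟨y, hy', rfl⟩
    · exact (hxb hx).1
    · have := (hyb hy').1; omega
  · have := (hxb hx').2; have := (hyb hy').1; omega
  · rintro (_ | t) ht
    · simp
    · simpa using hbd t (by simpa using ht)

/-- The first-return decomposition behind the Catalan recursion. -/
lemma exists_of_mem_orderedParking_succ {q : ℕ} {b : List ℕ} (hb : b ∈ orderedParking m (q + 1)) :
    ∃ s r xs ys, s + r = q ∧ xs ∈ orderedParking m s ∧ ys ∈ orderedParking (m + 1) r ∧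
      b = m :: shiftAppend s xs ys := by
  obtain ⟨hlen, hsort, hbd⟩ := hb
  cases b with
  | nil => simp at hlen
  | cons x b =>
    obtain rfl : x = m := by
      have := hbd 0 (by simp)
      simp only [List.getElem_cons_zero, add_zero] at this
      omega
    have hb : ∀ t (h : t < b.length), b[t] ≤ x + (t + 1) := fun t ht =>
      (hbd (t + 1) (by simpa using ht)).2
    obtain ⟨s, xs, ys, hxs, hys, hxys, rfl⟩ := exists_shiftAppend_of_pairwise
      (List.pairwise_cons.1 hsort).2 (List.pairwise_cons.1 hsort).1
    have hys_bd := ((forall_getElem_shiftAppend (P := fun t y => y ≤ x + (t + 1))).1 hb).2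
    refine ⟨s, ys.length, xs, ys, by simp [hxs.1] at hlen; omega, hxs,
      ⟨rfl, hys, fun u hu => ⟨hxys _ (List.getElem_mem hu), ?_⟩⟩, rfl⟩
    have := hys_bd u hu
    have := hxs.1
    omega

lemma orderedParking_succ (q : ℕ) : orderedParking m (q + 1) = ⋃ p ∈ antidiagonal q,
    List.cons m '' (Function.uncurry (shiftAppend p.1) ''
      (orderedParking m p.1 ×ˢ orderedParking (m + 1) p.2)) := by
  ext b
  simp only [Set.mem_iUnion, Set.mem_image, Set.mem_prod, Prod.exists, Function.uncurry_apply_pair,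
    HasAntidiagonal.mem_antidiagonal, exists_prop]
  constructor
  · intro hb
    obtain ⟨s, r, xs, ys, hsr, hxs, hys, rfl⟩ := exists_of_mem_orderedParking_succ hb
    exact ⟨s, r, hsr, _, ⟨xs, ys, ⟨hxs, hys⟩, rfl⟩, rfl⟩
  · rintro ⟨s, r, rfl, _, ⟨xs, ys, ⟨hxs, hys⟩, rfl⟩, rfl⟩
    exact cons_shiftAppend_mem_orderedParking hxs hys

theorem ncard_orderedParking (i : ℕ) : (orderedParking m i).ncard = catalan i := by
  induction i using Nat.strong_induction_on generalizing m with
  | _ i ih =>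
  cases i with
  | zero =>
    have : orderedParking m 0 = {[]} := by
      ext b
      simp +contextual [orderedParking, List.length_eq_zero_iff]
    simp [this]
  | succ q =>
    rw [orderedParking_succ, ncard_biUnion_finset, catalan_succ']
    · refine Finset.sum_congr rfl fun p hp => ?_
      have hp := HasAntidiagonal.mem_antidiagonal.1 hp
      rw [Set.ncard_image_of_injective _ List.cons_injective,
        ncard_image_shiftAppend fun _ h => h.1, ih _ (by omega), ih _ (by omega)]
    · exact fun p _ =>
        (((orderedParking_finite _ _).prod (orderedParking_finite _ _)).image _).image _
    · rintro p hp p' hp' hne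
      refine Set.disjoint_left.2 ?_
      rintro _ ⟨_, ⟨⟨xs, ys⟩, ⟨hxs, hys⟩, rfl⟩, rfl⟩ ⟨_, ⟨⟨xs', ys'⟩, ⟨hxs', hys'⟩, h⟩, h'⟩
      obtain ⟨he, -⟩ := shiftAppend_eq_shiftAppend hxs' hxs
        (fun y hy => (bounds_of_mem_orderedParking hys' hy).1)
        (fun y hy => (bounds_of_mem_orderedParking hys hy).1) (h.trans (List.cons_injective h'))
      have hp := HasAntidiagonal.mem_antidiagonal.1 hp
      have hp' := HasAntidiagonal.mem_antidiagonal.1 hp'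
      exact hne (Prod.ext he.symm (by omega))

end Catalan

section MaxLead

def opMaxLeadSet (n k l m : ℕ) : Set (List ℕ) :=
  {a | IsOrderedPrefSet n a ∧ flaws n a = k ∧ (∀ x ∈ a, x ≤ l) ∧ l ∈ a ∧ a.head? = some m}

variable {n k l m i j : ℕ} {xs ys : List ℕ}

lemma opMaxLeadSet_finite (n k l m : ℕ) : (opMaxLeadSet n k l m).Finite :=
  (finite_setOf_length_eq_forall_le n n).subset fun _ ha =>
    ⟨ha.1.1.1, fun x hx => (ha.1.1.2 x hx).2⟩

lemma le_succ_and_lt_of_mem_opMaxLeadSet {a : List ℕ} (ha : a ∈ opMaxLeadSet n k l j) :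
    j ≤ k + 1 ∧ k < n := by
  obtain ⟨⟨⟨hlen, hbd⟩, hsort⟩, hfl, -, -, hhead⟩ := ha
  have hjn := (hbd j (List.mem_of_head? hhead)).2
  constructor
  · have := length_le_flawsFrom_add_card (n := n) a ∅
      fun y hy => le_of_mem_of_head?_eq hsort hhead hy
    rw [← flaws, hfl, hlen, Finset.sdiff_empty, Nat.card_Icc] at this
    omega
  · cases a with
    | nil => simp at hhead
    | cons p rest =>
      obtain rfl : p = j := by simpa using hhead
      rw [flaws, flawsFrom_cons_of_some _ (firstFree_eq_some_s17 le_rfl hjn (by simp) (by omega))]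
        at hfl
      have := flawsFrom_le_length (n := n) rest (insert p ∅)
      simp only [List.length_cons] at hlen
      omega

lemma mem_opMaxLeadSet_of_shiftAppend_mem (hmj : m < j) (hxs : xs ∈ orderedParking m i)
    (hys : ys.Pairwise (· ≤ ·)) (hj : ys.head? = some j)
    (ha : shiftAppend i xs ys ∈ opMaxLeadSet n k l m) : ys ∈ opMaxLeadSet (n - i) k (l - i) j := by
  obtain ⟨⟨⟨hlen, hbd⟩, -⟩, hfl, hle, hl, -⟩ := ha
  have hyj := fun {y} (hy : y ∈ ys) => le_of_mem_of_head?_eq hys hj hy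
  have hmem : ∀ {y}, y ∈ ys → y + i ∈ shiftAppend i xs ys :=
    fun hy => mem_shiftAppend.2 (Or.inr ⟨_, hy, rfl⟩)
  have hjn := (hbd _ (hmem (List.mem_of_head? hj))).2
  have hjl := hle _ (hmem (List.mem_of_head? hj))
  rw [flaws_shiftAppend hxs (fun y hy => (hmj.trans_le (hyj hy)).le) (by omega)] at hfl
  refine ⟨⟨⟨by simp [hxs.1] at hlen; omega, fun y hy => ?_⟩, hys⟩, hfl,
    fun y hy => by have := hle _ (hmem hy); omega, ?_, hj⟩
  · have := hyj hy
    have := (hbd _ (hmem hy)).2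
    omega
  · rcases mem_shiftAppend.1 hl with hl | ⟨y, hy, rfl⟩
    · have := (bounds_of_mem_orderedParking hxs hl).2
      omega
    · simpa using hy

lemma shiftAppend_mem_opMaxLeadSet (hm : 1 ≤ m) (hi : 0 < i) (hmj : m < j)
    (hxs : xs ∈ orderedParking m i) (hys : ys ∈ opMaxLeadSet (n - i) k (l - i) j) :
    shiftAppend i xs ys ∈ opMaxLeadSet n k l m := by
  obtain ⟨⟨⟨hlen, hbd⟩, hsort⟩, hfl, hle, hl, hj⟩ := hys
  have hxb := fun {x} (hx : x ∈ xs) => bounds_of_mem_orderedParking hxs hx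
  have hyj := fun {y} (hy : y ∈ ys) => le_of_mem_of_head?_eq hsort hj hy
  have hjn := (hbd j (List.mem_of_head? hj)).2
  have hjl := hyj hl
  refine ⟨⟨⟨by simp [hxs.1, hlen]; omega, fun x hx => ?_⟩,
    pairwise_shiftAppend hxs.2.1 hsort fun x hx y hy => ?_⟩, ?_, fun x hx => ?_,
    mem_shiftAppend.2 (Or.inr ⟨l - i, hl, by omega⟩), ?_⟩
  · rcases mem_shiftAppend.1 hx with hx | ⟨y, hy, rfl⟩
    · have := hxb hx; omega
    · have := (hbd y hy).2; have := hyj hy; omega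
  · have := (hxb hx).2; have := hyj hy; omega
  · rwa [flaws_shiftAppend hxs (fun y hy => (hmj.trans_le (hyj hy)).le) (by omega)]
  · rcases mem_shiftAppend.1 hx with hx | ⟨y, hy, rfl⟩
    · have := (hxb hx).2; omega
    · have := hle y hy; omega
  · simp [shiftAppend, List.head?_append, head?_eq_of_mem_orderedParking hxs hi]

lemma exists_shiftAppend_of_mem_opMaxLeadSet {a : List ℕ} (hm : 1 ≤ m) (hmk : m ≤ k)
    (ha : a ∈ opMaxLeadSet n k l m) : ∃ i j xs ys, 0 < i ∧ m < j ∧ xs ∈ orderedParking m i ∧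
      ys.Pairwise (· ≤ ·) ∧ ys.head? = some j ∧ a = shiftAppend i xs ys := by
  obtain ⟨i, xs, ys, hxs, hys, hmys, rfl⟩ := exists_shiftAppend_of_pairwise ha.1.2
    fun x hx => le_of_mem_of_head?_eq ha.1.2 ha.2.2.2.2 hx
  cases ys with
  | nil =>
    have hlen := ha.1.1.1
    simp only [length_shiftAppend, hxs.1, List.length_nil, add_zero] at hlen
    subst hlen
    have hk := ha.2.1
    simp only [shiftAppend, List.map_nil, List.append_nil] at hk
    have := flaws_le_of_mem_orderedParking hxs
    exact absurd hk (by omega)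
  | cons y ys =>
    refine ⟨i, y, xs, y :: ys, Nat.pos_of_ne_zero fun hi => ?_, hmys y List.mem_cons_self, hxs, hys,
      rfl, rfl⟩
    subst hi
    have hhead := ha.2.2.2.2
    simp only [shiftAppend, List.length_eq_zero_iff.1 hxs.1, add_zero, List.map_id_fun', id_eq,
      List.nil_append, List.head?_cons, Option.some.injEq] at hhead
    exact (hmys y List.mem_cons_self).ne' hhead

lemma opMaxLeadSet_eq_biUnion (hm : 1 ≤ m) (hmk : m ≤ k) :
    opMaxLeadSet n k l m = ⋃ p ∈ Finset.Icc (m + 1) (k + 1) ×ˢ Finset.Icc 1 (n - k),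
      Function.uncurry (shiftAppend p.2) ''
        (orderedParking m p.2 ×ˢ opMaxLeadSet (n - p.2) k (l - p.2) p.1) := by
  ext a
  simp only [Set.mem_iUnion, Set.mem_image, Set.mem_prod, Prod.exists, Function.uncurry_apply_pair,
    Finset.mem_product, Finset.mem_Icc, exists_prop]
  constructor
  · intro ha
    obtain ⟨i, j, xs, ys, hi, hmj, hxs, hys, hj, rfl⟩ :=
      exists_shiftAppend_of_mem_opMaxLeadSet hm hmk ha
    have hys' := mem_opMaxLeadSet_of_shiftAppend_mem hmj hxs hys hj ha
    obtain ⟨hjk, hkn⟩ := le_succ_and_lt_of_mem_opMaxLeadSet hys'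
    exact ⟨j, i, ⟨⟨hmj, hjk⟩, hi, by omega⟩, xs, ys, ⟨hxs, hys'⟩, rfl⟩
  · rintro ⟨j, i, ⟨⟨hmj, -⟩, hi, -⟩, xs, ys, ⟨hxs, hys⟩, rfl⟩
    exact shiftAppend_mem_opMaxLeadSet hm hi hmj hxs hys

lemma pairwiseDisjoint_shiftAppend_image (m n k l : ℕ) :
    {p : ℕ × ℕ | m < p.1}.PairwiseDisjoint fun p => Function.uncurry (shiftAppend p.2) ''
      (orderedParking m p.2 ×ˢ opMaxLeadSet (n - p.2) k (l - p.2) p.1) := by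
  rintro ⟨j, i⟩ hj ⟨j', i'⟩ hj' hne
  refine Set.disjoint_left.2 ?_
  rintro _ ⟨⟨xs, ys⟩, ⟨hxs, hys⟩, rfl⟩ ⟨⟨xs', ys'⟩, ⟨hxs', hys'⟩, h⟩
  have hgt := fun {N L j₀ zs} (hj₀ : m < j₀) (hzs : zs ∈ opMaxLeadSet N k L j₀) y (hy : y ∈ zs) =>
    hj₀.trans_le (le_of_mem_of_head?_eq hzs.1.2 hzs.2.2.2.2 hy)
  obtain ⟨rfl, -, rfl⟩ := shiftAppend_eq_shiftAppend hxs' hxs (hgt hj' hys') (hgt hj hys) h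
  exact hne (by simpa [hys.2.2.2.2] using hys'.2.2.2.2)

end MaxLead

theorem stmt17_general (n k l m : ℕ) (hm : 1 ≤ m) (hmk : m ≤ k) :
    opMaxLead n k l m
      = ∑ j ∈ Finset.Icc (m + 1) (k + 1), ∑ i ∈ Finset.Icc 1 (n - k),
          catalan i * opMaxLead (n - i) k (l - i) j := by
  change (opMaxLeadSet n k l m).ncard = _
  rw [opMaxLeadSet_eq_biUnion hm hmk, ncard_biUnion_finset, Finset.sum_product]
  · refine Finset.sum_congr rfl fun j _ => Finset.sum_congr rfl fun i _ => ?_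
    rw [ncard_image_shiftAppend fun _ h => h.1, ncard_orderedParking]
    rfl
  · exact fun p _ => ((orderedParking_finite _ _).prod (opMaxLeadSet_finite _ _ _ _)).image _
  · refine (pairwiseDisjoint_shiftAppend_image m n k l).subset fun p hp => ?_
    simp only [Finset.coe_product, Set.mem_prod, Finset.coe_Icc, Set.mem_Icc] at hp
    exact hp.1.1

theorem stmt17 (n k l m : ℕ) (hm : 1 ≤ m) (hmk : m ≤ k) (hl : k + 1 ≤ l) (hn : l ≤ n) :
    opMaxLead n k l m
      = ∑ j ∈ Finset.Icc (m + 1) (k + 1), ∑ i ∈ Finset.Icc 1 (n - k),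
          catalan i * opMaxLead (n - i) k (l - i) j :=
  stmt17_general n k l m hm hmk
end

section
/- For integers k ≥ 1 and n ≥ k+1, op_{n,k} = Σ_{i=0}^{n−k−1} c_i · (op_{n−i,k} − op_{n−i,k}^1), where c_i is the i-th Catalan number; equivalently, op_{n,k}^1 = Σ_{i=1}^{n−k−1} c_i · (op_{n−i,k} − op_{n−i,k}^1). -/
/-!
For a nondecreasing preference list `a` (indexed from `0`), car `m` parks in space
`max_{j ≤ m} (a_j + m - j)` as long as that space is at most `n`, and once a car fails all later
cars fail too. Hence `a` has at most `k` flaws iff `a_m ≤ k + 1 + m` for all `m < n - k`.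

If `a` has leading term `1` and `k ≥ 1` flaws, let `i ≥ 1` be the first index with `a_i > i + 1`.
The entries before `i` form an ordered parking function, which fills spaces `1, …, i` exactly, so
the remaining entries, shifted down by `i`, form an ordered preference set of length `n - i` with
`k` flaws and leading term at least `2`; conversely every such pair glues back. Ordered parking
functions of length `i` are counted by `c_i`: splitting one at the last index `i` with `a_i = i + 1`
gives the Catalan recursion. This yields the formula for `op_{n,k}^1`, and adding the term
`op_{n,k} - op_{n,k}^1` for `i = 0` gives the formula for `op_{n,k}`.
-/

open Finset

section Lists

variable {i : ℕ} {a : List ℕ}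

lemma getElem_le_of_mem_drop (hs : a.Pairwise (· ≤ ·)) (hi : i < a.length) {x : ℕ}
    (hx : x ∈ a.drop i) : a[i] ≤ x := by
  have hs' := hs.drop (i := i)
  rw [List.drop_eq_getElem_cons hi, List.pairwise_cons] at hs'
  rw [List.drop_eq_getElem_cons hi, List.mem_cons] at hx
  rcases hx with rfl | hx
  · exact le_rfl
  · exact hs'.1 x hx

lemma take_append_map_sub_add (h : ∀ x ∈ a.drop i, i ≤ x) :
    a.take i ++ ((a.drop i).map (· - i)).map (· + i) = a := by
  rw [List.map_map, List.map_congr_left (g := id) fun x hx => by simp [Nat.sub_add_cancel (h x hx)],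
    List.map_id, List.take_append_drop]

end Lists

def BelowStair (c : ℕ) (l : List ℕ) : Prop :=
  ∀ m (hm : m < l.length), l[m] ≤ c + m

instance (c : ℕ) : DecidablePred (BelowStair c) := fun l =>
  inferInstanceAs (Decidable (∀ m (hm : m < l.length), l[m] ≤ c + m))

section BelowStair

variable {c d m : ℕ} {l p r : List ℕ}

@[simp] lemma belowStair_nil : BelowStair c [] := fun _ hm => absurd hm (by simp)

lemma belowStair_cons {x : ℕ} : BelowStair c (x :: l) ↔ x ≤ c ∧ BelowStair (c + 1) l := by
  constructor
  · intro h
    refine ⟨h 0 (by simp), fun m hm => ?_⟩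
    have := h (m + 1) (by simpa using hm)
    simp only [List.getElem_cons_succ] at this
    omega
  · rintro ⟨hx, hl⟩ (_ | m) hm
    · simpa using hx
    · simpa [Nat.add_assoc, Nat.add_comm 1] using hl m (by simpa using hm)

lemma belowStair_append :
    BelowStair c (p ++ r) ↔ BelowStair c p ∧ BelowStair (c + p.length) r := by
  induction p generalizing c with
  | nil => simp
  | cons x p ih => simp [belowStair_cons, ih, Nat.add_assoc, Nat.add_comm 1, and_assoc]

lemma belowStair_map_add : BelowStair (c + d) (l.map (· + d)) ↔ BelowStair c l := by
  refine forall_congr' fun m => ?_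
  simp only [List.length_map, List.getElem_map]
  exact forall_congr' fun _ => by omega

lemma BelowStair.mono (h : BelowStair c l) (hcd : c ≤ d) : BelowStair d l :=
  fun m hm => (h m hm).trans (by omega)

lemma BelowStair.take (h : BelowStair c l) : BelowStair c (l.take m) :=
  fun i hi => by simpa using h i (by simp only [List.length_take] at hi; omega)

lemma BelowStair.le_length (h : BelowStair 1 l) {x : ℕ} (hx : x ∈ l) : x ≤ l.length := by
  obtain ⟨m, hm, rfl⟩ := List.mem_iff_getElem.mp hx
  exact (h m hm).trans (by omega)

lemma exists_first_gt_of_not_belowStair (h : ¬ BelowStair c l) :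
    ∃ i, ∃ hi : i < l.length, c + i < l[i] ∧ BelowStair c (l.take i) := by
  classical
  have hex : ∃ i, ∃ hi : i < l.length, c + i < l[i] := by simpa [BelowStair] using h
  obtain ⟨hi, hgt⟩ := Nat.find_spec hex
  refine ⟨Nat.find hex, hi, hgt, fun t ht => ?_⟩
  simp only [List.length_take] at ht
  have := Nat.find_min hex (m := t) (by omega)
  simp only [not_exists, not_lt] at this
  simpa using this (by omega)

lemma belowStair_append_map_add :
    BelowStair c (p ++ r.map (· + p.length)) ↔ BelowStair c p ∧ BelowStair c r := by
  rw [belowStair_append, belowStair_map_add]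

lemma belowStair_take_append_map_add :
    BelowStair c ((p ++ r.map (· + p.length)).take m) ↔
      BelowStair c (p.take m) ∧ BelowStair c (r.take (m - p.length)) := by
  rw [List.take_append, ← List.map_take, belowStair_append]
  rcases le_total m p.length with hm | hm
  · simp [Nat.sub_eq_zero_of_le hm]
  · rw [List.take_of_length_le hm, belowStair_map_add]

end BelowStair

section Parking

variable {n t : ℕ} {occ : Finset ℕ}

lemma firstFree_eq_none_iff {p : ℕ} :
    firstFree n occ p = none ↔ ∀ j, p ≤ j → j ≤ n → j ∈ occ := by
  simp only [firstFree, List.find?_range'_eq_none, Bool.not_eq_true', decide_eq_false_iff_not,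
    not_not]
  exact forall_congr' fun j => by constructor <;> intro h hp hj <;> exact h hp (by omega)

lemma firstFree_eq_some_of_frontier {p : ℕ} (hocc : ∀ j, p ≤ j → (j ∈ occ ↔ j ≤ t))
    (h : max p (t + 1) ≤ n) : firstFree n occ p = some (max p (t + 1)) := by
  simp only [firstFree, List.find?_range'_eq_some, decide_eq_true_eq, List.mem_range'_1,
    Bool.not_eq_true', decide_eq_false_iff_not, not_not]
  refine ⟨fun hmem => ?_, by omega, fun j hpj hj => (hocc j hpj).2 (by omega)⟩
  have := (hocc _ (le_max_left _ _)).1 hmem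
  omega

lemma flawsFrom_eq_length_s18 {l : List ℕ} (hfull : ∀ x ∈ l, ∀ j, x ≤ j → j ≤ n → j ∈ occ) :
    flawsFrom n l occ = l.length := by
  induction l with
  | nil => rfl
  | cons x l ih =>
    have hx : firstFree n occ x = none := firstFree_eq_none_iff.2 (hfull x (by simp))
    rw [flawsFrom, hx, ih fun y hy => hfull y (by simp [hy]), List.length_cons]

/-- Above `p₀` the occupied spaces are exactly those up to `t`; the right-hand side says that car
number `l.length - k - 1` (counting from `0`), if there is one, still finds a space. -/
lemma flawsFrom_le_iff {l : List ℕ} {p₀ : ℕ} (hl : l.Pairwise (· ≤ ·)) (hp₀ : ∀ x ∈ l, p₀ ≤ x)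
    (hocc : ∀ j, p₀ ≤ j → (j ∈ occ ↔ j ≤ t)) (k : ℕ) :
    flawsFrom n l occ ≤ k ↔ l.length ≤ k ∨
      (t + l.length ≤ n + k ∧ BelowStair (n + k + 1 - l.length) (l.take (l.length - k))) := by
  induction l generalizing occ t p₀ k with
  | nil => simp [flawsFrom]
  | cons x l ih =>
    rw [List.pairwise_cons] at hl
    have hocc' : ∀ j, x ≤ j → (j ∈ occ ↔ j ≤ t) := fun j hj => hocc j ((hp₀ x (by simp)).trans hj)
    simp only [List.length_cons]
    by_cases hs : max x (t + 1) ≤ n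
    · have hocc_ins : ∀ j, x ≤ j → (j ∈ insert (max x (t + 1)) occ ↔ j ≤ max x (t + 1)) :=
        fun j hj => by rw [Finset.mem_insert, hocc' j hj]; omega
      rw [flawsFrom, firstFree_eq_some_of_frontier hocc' hs, ih hl.2 hl.1 hocc_ins]
      obtain hk | rfl | hk := lt_trichotomy l.length k
      · exact iff_of_true (Or.inl hk.le) (Or.inl hk)
      · refine iff_of_true (Or.inl le_rfl) (Or.inr ⟨by omega, ?_⟩)
        rw [show l.length + 1 - l.length = 1 by omega,
          show n + l.length + 1 - (l.length + 1) = n by omega]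
        simpa [belowStair_cons] using le_of_max_le_left hs
      · rw [show l.length + 1 - k = l.length - k + 1 by omega, List.take_succ_cons,
          belowStair_cons, or_iff_right (by omega), or_iff_right (by omega), ← and_assoc]
        by_cases hL : l.length ≤ n + k
        · rw [show n + k + 1 - (l.length + 1) + 1 = n + k + 1 - l.length by omega]
          exact and_congr_left' (by omega)
        · exact iff_of_false (fun h => by omega) (fun h => by omega)
    · have hfail : flawsFrom n (x :: l) occ = l.length + 1 :=
        flawsFrom_eq_length_s18 fun y hy j hyj hjn => by
          have : x ≤ y := (List.mem_cons.1 hy).elim (fun h => h.ge) (hl.1 y)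
          exact (hocc' j (by omega)).2 (by omega)
      rw [hfail]
      refine ⟨Or.inl, Or.rec id fun ⟨ht, hbelow⟩ => ?_⟩
      by_contra hk
      rw [show l.length + 1 - k = l.length - k + 1 by omega, List.take_succ_cons,
        belowStair_cons] at hbelow
      omega

end Parking

section OrderedPrefSet

variable {n m i : ℕ} {a p r : List ℕ}

lemma IsOrderedPrefSet.append_map_add (hp : IsOrderedPrefSet i p) (hr : IsOrderedPrefSet m r) :
    IsOrderedPrefSet (i + m) (p ++ r.map (· + i)) := by
  obtain ⟨⟨hpl, hpb⟩, hps⟩ := hp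
  obtain ⟨⟨hrl, hrb⟩, hrs⟩ := hr
  refine ⟨⟨by simp [hpl, hrl], fun x hx => ?_⟩, ?_⟩
  · rcases List.mem_append.1 hx with hx | hx
    · have := hpb x hx
      omega
    · obtain ⟨y, hy, rfl⟩ := List.mem_map.1 hx
      have := hrb y hy
      omega
  · refine List.pairwise_append.2 ⟨hps, hrs.map _ fun x y h => by omega, fun x hx y hy => ?_⟩
    obtain ⟨z, hz, rfl⟩ := List.mem_map.1 hy
    have := hpb x hx
    have := hrb z hz
    omega

lemma IsOrderedPrefSet.take (ha : IsOrderedPrefSet n a) (hst : BelowStair 1 (a.take i))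
    (hi : i ≤ n) : IsOrderedPrefSet i (a.take i) := by
  obtain ⟨⟨hal, hab⟩, has⟩ := ha
  have hlen : (a.take i).length = i := by simp [hal, hi]
  refine ⟨⟨hlen, fun x hx => ⟨(hab x (List.mem_of_mem_take hx)).1, ?_⟩⟩, has.take⟩
  exact hlen ▸ hst.le_length hx

lemma IsOrderedPrefSet.drop_map_sub (ha : IsOrderedPrefSet n a) (h : ∀ x ∈ a.drop i, i < x) :
    IsOrderedPrefSet (n - i) ((a.drop i).map (· - i)) := by
  obtain ⟨⟨hal, hab⟩, has⟩ := ha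
  refine ⟨⟨by simp [hal], fun x hx => ?_⟩, (has.drop).map _ fun x y h => by omega⟩
  obtain ⟨y, hy, rfl⟩ := List.mem_map.1 hx
  have := hab y (List.mem_of_mem_drop hy)
  have := h y hy
  omega

lemma flaws_le_iff (ha : IsOrderedPrefSet n a) (k : ℕ) :
    flaws n a ≤ k ↔ BelowStair (k + 1) (a.take (n - k)) := by
  obtain ⟨⟨hal, hab⟩, has⟩ := ha
  have hocc : ∀ j, 1 ≤ j → (j ∈ (∅ : Finset ℕ) ↔ j ≤ 0) := fun j hj => by
    simp only [Finset.notMem_empty, false_iff]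
    omega
  rw [flaws, flawsFrom_le_iff has (fun x hx => (hab x hx).1) hocc, hal]
  rcases le_or_gt n k with hk | hk
  · simp [hk, Nat.sub_eq_zero_of_le hk]
  · rw [show n + k + 1 - n = k + 1 by omega]
    simp [hk.not_ge]

lemma flaws_eq_zero_iff (ha : IsOrderedPrefSet n a) : flaws n a = 0 ↔ BelowStair 1 a := by
  rw [← Nat.le_zero, flaws_le_iff ha, Nat.sub_zero, List.take_of_length_le ha.1.1.le]

lemma flaws_lt (ha : IsOrderedPrefSet n a) (hn : 0 < n) : flaws n a < n := by
  obtain ⟨x, l, rfl⟩ := List.exists_cons_of_length_pos (ha.1.1 ▸ hn)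
  rw [Nat.lt_iff_le_pred hn, flaws_le_iff ha, show n - (n - 1) = 1 by omega,
    show n - 1 + 1 = n by omega]
  simp [belowStair_cons, (ha.1.2 x (by simp)).2]

lemma flaws_append_map_add (hp : IsOrderedPrefSet i p) (hst : BelowStair 1 p)
    (hr : IsOrderedPrefSet m r) : flaws (i + m) (p ++ r.map (· + i)) = flaws m r := by
  have hle : ∀ k, flaws (i + m) (p ++ r.map (· + i)) ≤ k ↔ flaws m r ≤ k := by
    intro k
    rw [flaws_le_iff (hp.append_map_add hr), flaws_le_iff hr, ← hp.1.1,
      belowStair_take_append_map_add, hp.1.1, show i + m - k - i = m - k by omega]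
    exact and_iff_right ((hst.take).mono (by omega))
  exact le_antisymm ((hle _).2 le_rfl) ((hle _).1 le_rfl)

end OrderedPrefSet

def boundedLists : ℕ → ℕ → Finset (List ℕ)
  | 0, _ => {[]}
  | n + 1, b => image₂ List.cons (Icc 1 b) (boundedLists n b)

lemma mem_boundedLists {n b : ℕ} {a : List ℕ} :
    a ∈ boundedLists n b ↔ a.length = n ∧ ∀ x ∈ a, 1 ≤ x ∧ x ≤ b := by
  induction n generalizing a with
  | zero => simp +contextual [boundedLists]
  | succ n ih =>
    cases a with
    | nil => simp [boundedLists]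
    | cons x a => simp [boundedLists, ih, and_assoc, and_left_comm]

def orderedPrefSets (n : ℕ) : Finset (List ℕ) :=
  (boundedLists n n).filter (·.Pairwise (· ≤ ·))

lemma mem_orderedPrefSets {n : ℕ} {a : List ℕ} : a ∈ orderedPrefSets n ↔ IsOrderedPrefSet n a := by
  simp [orderedPrefSets, mem_boundedLists, IsOrderedPrefSet, IsPrefSet]

lemma ncard_orderedPrefSet_and (n : ℕ) (P : List ℕ → Prop) [DecidablePred P] :
    {a | IsOrderedPrefSet n a ∧ P a}.ncard = ((orderedPrefSets n).filter P).card := by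
  rw [← Set.ncard_coe_finset]
  congr 1
  ext a
  simp [mem_orderedPrefSets]

lemma opEq_eq_card (n k : ℕ) : opEq n k = ((orderedPrefSets n).filter (flaws n · = k)).card :=
  ncard_orderedPrefSet_and n _

lemma opLead_eq_card (n k m : ℕ) :
    opLead n k m = ((orderedPrefSets n).filter fun a => flaws n a = k ∧ a.head? = some m).card :=
  ncard_orderedPrefSet_and n _

lemma opEq_sub_opLead_eq_card (n k : ℕ) :
    opEq n k - opLead n k 1 =
      ((orderedPrefSets n).filter fun a => flaws n a = k ∧ a.head? ≠ some 1).card := by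
  rw [opEq_eq_card, opLead_eq_card, ← card_filter_add_card_filter_not
    (s := (orderedPrefSets n).filter (flaws n · = k)) (fun a => a.head? = some 1),
    filter_filter, filter_filter, Nat.add_sub_cancel_left]

theorem card_eq_sum_card_mul_card_of_split {S : Finset (List ℕ)} {I : Finset ℕ}
    {P R : ℕ → Finset (List ℕ)} (hP : ∀ i ∈ I, ∀ p ∈ P i, p.length = i)
    (hjoin : ∀ i ∈ I, ∀ p ∈ P i, ∀ r ∈ R i, p ++ r.map (· + i) ∈ S)
    (hsplit : ∀ a ∈ S, ∃ i ∈ I,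
      a.take i ∈ P i ∧ (a.drop i).map (· - i) ∈ R i ∧ ∀ x ∈ a.drop i, i ≤ x)
    (hsep : ∀ i ∈ I, ∀ j ∈ I, i < j → ∀ p ∈ P i, ∀ r ∈ R i, ∀ p' ∈ P j, ∀ r' ∈ R j,
      p ++ r.map (· + i) ≠ p' ++ r'.map (· + j)) :
    S.card = ∑ i ∈ I, (P i).card * (R i).card := by
  have hS : S = I.biUnion fun i => (P i ×ˢ R i).image fun x => x.1 ++ x.2.map (· + i) := by
    ext a
    simp only [mem_biUnion, mem_image, mem_product, Prod.exists]
    constructor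
    · intro ha
      obtain ⟨i, hi, hp, hr, hx⟩ := hsplit a ha
      exact ⟨i, hi, _, _, ⟨hp, hr⟩, take_append_map_sub_add hx⟩
    · rintro ⟨i, hi, p, r, ⟨hp, hr⟩, rfl⟩
      exact hjoin i hi p hp r hr
  rw [hS, card_biUnion]
  · refine sum_congr rfl fun i hi => ?_
    rw [card_image_of_injOn, card_product]
    rintro ⟨p, r⟩ hpr ⟨p', r'⟩ hpr' h
    simp only [coe_product, Set.mem_prod, mem_coe] at hpr hpr'
    dsimp only at h
    obtain ⟨hpp, hrr⟩ := List.append_inj h (by rw [hP i hi p hpr.1, hP i hi p' hpr'.1])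
    rw [hpp, (List.map_injective_iff.2 (add_left_injective i)) hrr]
  · intro i hi j hj hij
    simp only [Function.onFun, disjoint_left, mem_image, mem_product, Prod.exists, not_exists,
      not_and]
    rintro a ⟨p, r, ⟨hp, hr⟩, rfl⟩ p' r' ⟨hp', hr'⟩ h
    rcases lt_or_gt_of_ne hij with hlt | hlt
    · exact hsep i hi j hj hlt p hp r hr p' hp' r' hr' h.symm
    · exact hsep j hj i hi hlt p' hp' r' hr' p hp r hr h

/-- The ordered parking functions of length `i`, i.e. the ordered preference sets without flaws
(`flaws_eq_zero_iff`). -/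
def staircases (i : ℕ) : Finset (List ℕ) :=
  (orderedPrefSets i).filter (BelowStair 1)

section Staircases

variable {n m i j : ℕ} {a p q p' q' : List ℕ}

lemma mem_staircases : p ∈ staircases i ↔ IsOrderedPrefSet i p ∧ BelowStair 1 p := by
  simp [staircases, mem_orderedPrefSets]

lemma length_of_mem_staircases (hp : p ∈ staircases i) : p.length = i :=
  (mem_staircases.1 hp).1.1.1

lemma head?_of_mem_staircases (hp : p ∈ staircases i) (hi : 0 < i) : p.head? = some 1 := by
  obtain ⟨⟨⟨hpl, hpb⟩, -⟩, hst⟩ := mem_staircases.1 hp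
  obtain ⟨x, l, rfl⟩ := List.exists_cons_of_length_pos (hpl ▸ hi)
  have := (hpb x (by simp)).1
  have := (belowStair_cons.1 hst).1
  rw [List.head?_cons, Option.some.injEq]
  omega

lemma exists_last_eq_of_belowStair (hst : BelowStair 1 a) (h0 : a.head? = some 1) :
    ∃ i, ∃ hi : i < a.length, a[i] = i + 1 ∧ ∀ m (hm : m < a.length), i < m → a[m] ≤ m := by
  classical
  let P m := ∃ hm : m < a.length, a[m] = m + 1
  have h0' : P 0 := by
    obtain ⟨x, l, rfl⟩ := List.exists_cons_of_ne_nil (List.ne_nil_of_mem (List.mem_of_mem_head? h0))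
    exact ⟨by simp, by simpa using h0⟩
  obtain ⟨hi, hai⟩ : P (Nat.findGreatest P a.length) := Nat.findGreatest_spec (Nat.zero_le _) h0'
  refine ⟨_, hi, hai, fun m hm him => ?_⟩
  have hne : ¬ P m := Nat.findGreatest_is_greatest him hm.le
  have := hst m hm
  simp only [P, hm, exists_true_left] at hne
  omega

lemma isOrderedPrefSet_one_cons_iff (hq : BelowStair 1 q) :
    IsOrderedPrefSet (m + 1) (1 :: q) ↔ IsOrderedPrefSet m q := by
  simp only [IsOrderedPrefSet, IsPrefSet, List.length_cons, List.mem_cons, forall_eq_or_imp,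
    List.pairwise_cons, Nat.add_right_cancel_iff]
  constructor
  · rintro ⟨⟨rfl, -, hb⟩, -, hs⟩
    exact ⟨⟨rfl, fun x hx => ⟨(hb x hx).1, hq.le_length hx⟩⟩, hs⟩
  · rintro ⟨⟨rfl, hb⟩, hs⟩
    exact ⟨⟨rfl, by omega, fun x hx => ⟨(hb x hx).1, by have := (hb x hx).2; omega⟩⟩,
      fun x hx => (hb x hx).1, hs⟩

lemma append_one_cons_mem_staircases (hi : i ≤ n) (hp : p ∈ staircases i)
    (hq : q ∈ staircases (n - i)) : p ++ (1 :: q).map (· + i) ∈ staircases (n + 1) := by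
  rw [mem_staircases] at hp hq ⊢
  have hr : IsOrderedPrefSet (n - i + 1) (1 :: q) := (isOrderedPrefSet_one_cons_iff hq.2).2 hq.1
  refine ⟨by simpa [show i + (n - i + 1) = n + 1 by omega] using hp.1.append_map_add hr, ?_⟩
  rw [← hp.1.1.1, belowStair_append_map_add, belowStair_cons]
  exact ⟨hp.2, le_rfl, hq.2.mono (by omega)⟩

lemma exists_split_of_mem_staircases (ha : a ∈ staircases (n + 1)) :
    ∃ i ∈ range (n + 1), a.take i ∈ staircases i ∧
      (a.drop i).map (· - i) ∈ (staircases (n - i)).image (List.cons 1) ∧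
      ∀ x ∈ a.drop i, i ≤ x := by
  obtain ⟨hops, hst⟩ := mem_staircases.1 ha
  have hlen : a.length = n + 1 := hops.1.1
  obtain ⟨i, hil, hai, hlast⟩ :=
    exists_last_eq_of_belowStair hst (head?_of_mem_staircases ha (Nat.succ_pos n))
  have hge : ∀ x ∈ a.drop i, i + 1 ≤ x := fun x hx => hai ▸ getElem_le_of_mem_drop hops.2 hil hx
  refine ⟨i, mem_range.2 (by omega), mem_staircases.2 ⟨hops.take hst.take (by omega), hst.take⟩,
    ?_, fun x hx => by have := hge x hx; omega⟩
  set q := (a.drop (i + 1)).map (· - i)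
  have hr : (a.drop i).map (· - i) = 1 :: q := by
    rw [List.drop_eq_getElem_cons hil, List.map_cons, hai, Nat.add_sub_cancel_left]
  have hrops : IsOrderedPrefSet (n - i + 1) (1 :: q) := by
    rw [← hr, show n - i + 1 = n + 1 - i by omega]
    exact hops.drop_map_sub fun x hx => hge x hx
  have hqst : BelowStair 1 q := by
    intro t ht
    simp only [q, List.length_map, List.length_drop] at ht
    simp only [q, List.getElem_map, List.getElem_drop]
    have := hlast (i + 1 + t) (by omega) (by omega)
    omega
  rw [hr]
  exact mem_image.2 ⟨q, mem_staircases.2 ⟨(isOrderedPrefSet_one_cons_iff hqst).1 hrops, hqst⟩, rfl⟩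

lemma append_one_cons_ne (hij : i < j) (hp : p.length = i) (hq : BelowStair 1 q)
    (hp' : p'.length = j) :
    p ++ (1 :: q).map (· + i) ≠ p' ++ (1 :: q').map (· + j) := by
  intro h
  have hj := congrArg (·[j]?) h
  rw [List.getElem?_append_right (by omega), List.getElem?_append_right (by omega), hp, hp',
    Nat.sub_self, show j - i = j - i - 1 + 1 by omega] at hj
  simp only [List.map_cons, List.getElem?_cons_succ, List.getElem?_map, List.getElem?_cons_zero,
    Option.map_eq_some_iff, List.getElem?_eq_some_iff] at hj
  obtain ⟨_, ⟨ht, rfl⟩, hv⟩ := hj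
  have := hq _ ht
  omega

theorem card_staircases (i : ℕ) : (staircases i).card = catalan i := by
  induction i using Nat.strong_induction_on with
  | _ i ih =>
    cases i with
    | zero => rw [catalan_zero]; rfl
    | succ n =>
      rw [card_eq_sum_card_mul_card_of_split (I := range (n + 1)) (P := staircases)
        (R := fun i => (staircases (n - i)).image (List.cons 1))
        (fun i _ p hp => length_of_mem_staircases hp)
        (fun i hi p hp r hr => by
          obtain ⟨q, hq, rfl⟩ := mem_image.1 hr
          exact append_one_cons_mem_staircases (by simpa [Nat.lt_succ_iff] using hi) hp hq)
        (fun a ha => exists_split_of_mem_staircases ha)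
        (fun i _ j _ hij p hp r hr p' hp' r' hr' => by
          obtain ⟨q, hq, rfl⟩ := mem_image.1 hr
          obtain ⟨q', -, rfl⟩ := mem_image.1 hr'
          exact append_one_cons_ne hij (length_of_mem_staircases hp)
            (mem_staircases.1 hq).2 (length_of_mem_staircases hp')),
        catalan_succ, Fin.sum_univ_eq_sum_range (fun i => catalan i * catalan (n - i))]
      refine sum_congr rfl fun i hi => ?_
      have hi : i < n + 1 := mem_range.1 hi
      rw [card_image_of_injective _ List.cons_injective, ih i (by omega), ih (n - i) (by omega)]

end Staircases

section LeadingOne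

variable {n k i j : ℕ} {a p r p' r' : List ℕ}

lemma append_map_add_ne_of_head?_ne_one (hij : i < j) (hp : p.length = i)
    (hr : ∀ x ∈ r, 1 ≤ x) (hr1 : r.head? ≠ some 1) (hp' : p'.length = j)
    (hst' : BelowStair 1 p') : p ++ r.map (· + i) ≠ p' ++ r'.map (· + j) := by
  intro h
  have hi := congrArg (·[i]?) h
  rw [List.getElem?_append_right (by omega), List.getElem?_append_left (by omega), hp,
    Nat.sub_self, List.getElem?_map, ← List.head?_eq_getElem?,
    List.getElem?_eq_getElem (by omega)] at hi
  obtain ⟨v, hv, hvi⟩ := Option.map_eq_some_iff.1 hi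
  have := hr v (List.mem_of_mem_head? hv)
  have := hst' i (by omega)
  exact hr1 (hv.trans (by congr 1; omega))

lemma exists_split_of_flaws_eq (hk : 1 ≤ k) (ha : IsOrderedPrefSet n a) (hfl : flaws n a = k)
    (ha1 : a.head? = some 1) :
    ∃ i ∈ Icc 1 (n - k - 1), a.take i ∈ staircases i ∧
      (a.drop i).map (· - i) ∈ (orderedPrefSets (n - i)).filter
        (fun r => flaws (n - i) r = k ∧ r.head? ≠ some 1) ∧
      ∀ x ∈ a.drop i, i ≤ x := by
  have hlen : a.length = n := ha.1.1
  have hnst : ¬ BelowStair 1 a := fun h => by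
    rw [← flaws_eq_zero_iff ha] at h
    omega
  obtain ⟨i, hil, hai, hpst⟩ := exists_first_gt_of_not_belowStair hnst
  have hp : a.take i ∈ staircases i := mem_staircases.2 ⟨ha.take hpst (by omega), hpst⟩
  have hge : ∀ x ∈ a.drop i, i + 2 ≤ x := fun x hx => by
    have := getElem_le_of_mem_drop ha.2 hil hx
    omega
  have hr : IsOrderedPrefSet (n - i) ((a.drop i).map (· - i)) :=
    ha.drop_map_sub fun x hx => by have := hge x hx; omega
  have hrfl : flaws (n - i) ((a.drop i).map (· - i)) = k := by
    rw [← flaws_append_map_add (mem_staircases.1 hp).1 hpst hr,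
      take_append_map_sub_add fun x hx => by have := hge x hx; omega,
      show i + (n - i) = n by omega, hfl]
  have hi1 : 1 ≤ i := by
    by_contra hi0
    obtain rfl : i = 0 := by omega
    rw [List.head?_eq_getElem?, List.getElem?_eq_getElem hil, Option.some.injEq] at ha1
    omega
  have hik : i ≤ n - k - 1 := by
    have := flaws_lt hr (by omega)
    omega
  have hr1 : ((a.drop i).map (· - i)).head? ≠ some 1 := by
    rw [List.drop_eq_getElem_cons hil]
    simp only [List.map_cons, List.head?_cons, ne_eq, Option.some.injEq]
    omega
  refine ⟨i, mem_Icc.2 ⟨hi1, hik⟩, hp, ?_, fun x hx => by have := hge x hx; omega⟩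
  simp only [mem_filter, mem_orderedPrefSets]
  exact ⟨hr, hrfl, hr1⟩

theorem opLead_one_eq_sum (hk : 1 ≤ k) :
    opLead n k 1 = ∑ i ∈ Icc 1 (n - k - 1), catalan i * (opEq (n - i) k - opLead (n - i) k 1) := by
  rw [opLead_eq_card, card_eq_sum_card_mul_card_of_split (P := staircases)
    (R := fun i => (orderedPrefSets (n - i)).filter
      fun r => flaws (n - i) r = k ∧ r.head? ≠ some 1)
    (fun i _ p hp => length_of_mem_staircases hp)
    (fun i hi p hp r hr => ?_)
    (fun a ha => ?_)
    (fun i _ j _ hij p hp r hr p' hp' r' _ => ?_)]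
  · refine sum_congr rfl fun i _ => ?_
    rw [card_staircases, opEq_sub_opLead_eq_card]
  · simp only [mem_filter, mem_orderedPrefSets] at hr ⊢
    obtain ⟨hpops, hpst⟩ := mem_staircases.1 hp
    have hi := mem_Icc.1 hi
    have hn : i + (n - i) = n := by omega
    have hops := hpops.append_map_add hr.1
    rw [hn] at hops
    refine ⟨hops, ?_, ?_⟩
    · rw [← hr.2.1, ← flaws_append_map_add hpops hpst hr.1, hn]
    · rw [List.head?_append_of_ne_nil _ (List.ne_nil_of_length_pos (by rw [hpops.1.1]; omega)),
        head?_of_mem_staircases hp (by omega)]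
  · simp only [mem_filter, mem_orderedPrefSets] at ha
    exact exists_split_of_flaws_eq hk ha.1 ha.2.1 ha.2.2
  · simp only [mem_filter, mem_orderedPrefSets] at hr
    exact append_map_add_ne_of_head?_ne_one hij (length_of_mem_staircases hp)
      (fun x hx => (hr.1.1.2 x hx).1) hr.2.2 (length_of_mem_staircases hp') (mem_staircases.1 hp').2

end LeadingOne

lemma opLead_le_opEq (n k m : ℕ) : opLead n k m ≤ opEq n k := by
  rw [opLead_eq_card, opEq_eq_card]
  exact card_le_card fun a ha => by
    simp only [mem_filter] at ha ⊢
    exact ⟨ha.1, ha.2.1⟩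

theorem stmt18 (n k : ℕ) (hk : 1 ≤ k) (hn : k + 1 ≤ n) :
    opEq n k = ∑ i ∈ Finset.range (n - k), catalan i * (opEq (n - i) k - opLead (n - i) k 1) ∧
    opLead n k 1
      = ∑ i ∈ Finset.Icc 1 (n - k - 1), catalan i * (opEq (n - i) k - opLead (n - i) k 1) := by
  have hlead := opLead_one_eq_sum (n := n) hk
  refine ⟨?_, hlead⟩
  rw [Nat.range_eq_Icc_zero_sub_one _ (by omega), ← insert_Icc_add_one_left_eq_Icc (Nat.zero_le _),
    sum_insert (by simp), zero_add, ← hlead, catalan_zero, one_mul, Nat.sub_zero]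
  have := opLead_le_opEq n k 1
  omega
end
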